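/- arXiv:2411.11676 — 3 statements merged into one kernel-verified Lean document; each statement's English description precedes it below -/
import Mathlib

section
/- For every real L ≥ 1 there exists β_*(L,d) > 0, depending only on L and d, such that the following holds whenever |β| ≤ β_*(L,d). If φ, ψ : 𝒮 → ℝ are two functions on the set 𝒮 of all strings of loops in ℤ^d such that each of them (i) takes the value 1 at the empty string, (ii) is invariant under backtrack erasures (its value at a string is unchanged when a backtrack of one of the loops of the string is erased), (iii) has absolute value at most L^{|s|} at every string s, and (iv) satisfies the master loop equation at every pair (s,𝐞) with s a non-empty string and 𝐞 an occurrence of an oriented edge in s, then φ = ψ. -/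
open scoped BigOperators Classical
noncomputable section

/-- A vertex of the lattice `ℤ^d`. -/
abbrev Vtx (d : ℕ) := Fin d → ℤ

/-- An oriented edge of `ℤ^d`, as an ordered pair of vertices. -/
abbrev Edge (d : ℕ) := Vtx d × Vtx d

/-- The reversal `e⁻¹` of an oriented edge. -/
def erev {d : ℕ} (e : Edge d) : Edge d := (e.2, e.1)

/-- `e` is a nearest-neighbour lattice edge: its endpoints differ by `±` a standard
basis vector. -/
def IsLatticeEdge {d : ℕ} (e : Edge d) : Prop :=
  ∃ i : Fin d, e.2 = e.1 + Pi.single i 1 ∨ e.1 = e.2 + Pi.single i 1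

/-- `e` is positively oriented: its endpoint is lexicographically larger than its start. -/
def IsPosEdge {d : ℕ} (e : Edge d) : Prop :=
  ∃ i : Fin d, e.1 i < e.2 i ∧ ∀ j : Fin d, j < i → e.1 j = e.2 j

/-- A loop: a finite cyclic sequence of lattice edges, each edge ending where the next
one starts (and the last ending where the first starts).  The empty list is the null loop. -/
def IsLoop {d : ℕ} (l : List (Edge d)) : Prop :=
  (∀ e ∈ l, IsLatticeEdge e) ∧ List.Chain' (fun e f => e.2 = f.1) l ∧
    ∀ e ∈ l.head?, ∀ f ∈ l.getLast?, f.2 = e.1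

/-- A string: a finite multiset of non-null loops. -/
def IsStringM {d : ℕ} (s : Multiset (List (Edge d))) : Prop :=
  ∀ l ∈ s, l ≠ [] ∧ IsLoop l

/-- The total length `|s|` of a string. -/
def strLenM {d : ℕ} (s : Multiset (List (Edge d))) : ℕ :=
  (s.map List.length).sum

/-- An oriented plaquette of `ℤ^d`: a base corner `x` together with an ordered pair of
distinct directions; its boundary loop is `x → x+e_i → x+e_i+e_j → x+e_j → x`. -/
structure Plaq (d : ℕ) where
  corner : Vtx d
  dir1 : Fin d
  dir2 : Fin d
  hdir : dir1 ≠ dir2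

/-- The reversal `p⁻¹` of an oriented plaquette. -/
def Plaq.rev {d : ℕ} (P : Plaq d) : Plaq d := ⟨P.corner, P.dir2, P.dir1, P.hdir.symm⟩

/-- The four oriented boundary edges of a plaquette, as a loop. -/
def Plaq.edges {d : ℕ} (P : Plaq d) : List (Edge d) :=
  [(P.corner, P.corner + Pi.single P.dir1 1),
   (P.corner + Pi.single P.dir1 1, P.corner + Pi.single P.dir1 1 + Pi.single P.dir2 1),
   (P.corner + Pi.single P.dir1 1 + Pi.single P.dir2 1, P.corner + Pi.single P.dir2 1),
   (P.corner + Pi.single P.dir2 1, P.corner)]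

/-- A plaquette is positively oriented when the edge connecting its two lexicographically
smallest vertices is positively oriented; in this encoding this says `dir2 < dir1`. -/
def Plaq.posOriented {d : ℕ} (P : Plaq d) : Prop := P.dir2 < P.dir1

/-- The area of a plaquette assignment `K : 𝒫 → ℕ`. -/
def parea {d : ℕ} (K : Plaq d → ℕ) : ℕ := ∑ᶠ p, K p

/-- Two plaquettes share an (unoriented) edge. -/
def SharesEdge {d : ℕ} (P Q : Plaq d) : Prop :=
  ∃ e ∈ P.edges, e ∈ Q.edges ∨ erev e ∈ Q.edges

/-- The support of a plaquette assignment: the positively oriented plaquettes `q` with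
`K q ≠ 0` or `K q⁻¹ ≠ 0`. -/
def psupp {d : ℕ} (K : Plaq d → ℕ) : Set (Plaq d) :=
  {q | q.posOriented ∧ (K q ≠ 0 ∨ K q.rev ≠ 0)}

/-- A plaquette assignment is connected if any two plaquettes of its support are joined by
a chain of plaquettes of the support in which consecutive plaquettes share an edge. -/
def PAConnected {d : ℕ} (K : Plaq d → ℕ) : Prop :=
  ∀ p ∈ psupp K, ∀ q ∈ psupp K,
    Relation.ReflTransGen (fun a b => a ∈ psupp K ∧ b ∈ psupp K ∧ SharesEdge a b) p q

/-- Positive splittings `𝕊₊(𝐞, s)` of a string `s` at the occurrence `𝐞`, given by the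
loop `l ∈ s` and the position `i` in `l` (the loop is rotated so the marked occurrence
comes first): for each other occurrence of the same oriented edge in the loop, writing the
rotated loop as `𝐞 π₂ 𝐞' π₃`, replace `l` in `s` by the two loops `𝐞 π₃` and `π₂ 𝐞'`. -/
def SplusSet {d : ℕ} (s : Multiset (List (Edge d))) (l : List (Edge d)) (i : ℕ) :
    Set (Multiset (List (Edge d))) :=
  {s' | ∃ (e : Edge d) (t : List (Edge d)) (k : ℕ),
    l.rotate i = e :: t ∧ t[k]? = some e ∧
    s' = (e :: t.drop (k + 1)) ::ₘ (t.take (k + 1)) ::ₘ s.erase l}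

/-- Negative splittings `𝕊₋(𝐞, s)`: for each occurrence of `e⁻¹` in the loop, writing the
rotated loop as `𝐞 π₂ 𝐞⁻¹ π₃`, replace `l` in `s` by the two loops `π₃` and `π₂`, any
null loop being discarded from the multiset. -/
def SminusSet {d : ℕ} (s : Multiset (List (Edge d))) (l : List (Edge d)) (i : ℕ) :
    Set (Multiset (List (Edge d))) :=
  {s' | ∃ (e : Edge d) (t : List (Edge d)) (k : ℕ),
    l.rotate i = e :: t ∧ t[k]? = some (erev e) ∧
    s' = (↑([t.drop (k + 1), t.take k].filter fun x => !x.isEmpty) :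
        Multiset (List (Edge d))) + s.erase l}

/-- Positive deformations `𝔻₊(𝐞, s)`: for each plaquette `q = π₃ 𝐞'' π₄` containing the
oriented edge `e`, replace the rotated loop `𝐞 π₂` by `𝐞 π₄ π₃ 𝐞'' π₂`. -/
def DplusSet {d : ℕ} (s : Multiset (List (Edge d))) (l : List (Edge d)) (i : ℕ) :
    Set (Multiset (List (Edge d))) :=
  {s' | ∃ (e : Edge d) (t : List (Edge d)) (q : Plaq d) (m : ℕ),
    l.rotate i = e :: t ∧ q.edges[m]? = some e ∧
    s' = (e :: (q.edges.drop (m + 1) ++ q.edges.take m ++ e :: t)) ::ₘ s.erase l}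

/-- Negative deformations `𝔻₋(𝐞, s)`: for each plaquette `p = π₃ 𝐞⁻¹ π₄` containing `e⁻¹`,
replace the rotated loop `𝐞 π₂` by `π₄ π₃ π₂`. -/
def DminusSet {d : ℕ} (s : Multiset (List (Edge d))) (l : List (Edge d)) (i : ℕ) :
    Set (Multiset (List (Edge d))) :=
  {s' | ∃ (e : Edge d) (t : List (Edge d)) (p : Plaq d) (m : ℕ),
    l.rotate i = e :: t ∧ p.edges[m]? = some (erev e) ∧
    s' = (p.edges.drop (m + 1) ++ p.edges.take m ++ t) ::ₘ s.erase l}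

/-- The master loop equation at a fixed location `(s, 𝐞)`, the occurrence `𝐞` being given
by a loop `l` of `s` and a position `i` in `l`:
`φ(s) = ∑_{𝕊₋} φ(s') − ∑_{𝕊₊} φ(s') + β ∑_{𝔻₋} φ(s') − β ∑_{𝔻₊} φ(s')`. -/
def SatisfiesMLE {d : ℕ} {𝕜 : Type*} [Field 𝕜] (β : 𝕜)
    (φ : Multiset (List (Edge d)) → 𝕜)
    (s : Multiset (List (Edge d))) (l : List (Edge d)) (i : ℕ) : Prop :=
  φ s = (∑ᶠ s' ∈ SminusSet s l i, φ s') - (∑ᶠ s' ∈ SplusSet s l i, φ s')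
      + β * (∑ᶠ s' ∈ DminusSet s l i, φ s') - β * (∑ᶠ s' ∈ DplusSet s l i, φ s')

/-- Invariance under backtrack erasures: the value of `φ` at a string is unchanged when a
backtrack `𝐞 𝐞⁻¹` of one of its loops is erased (a resulting null loop being removed). -/
def BacktrackInvariant {d : ℕ} {𝕜 : Type*} [Field 𝕜]
    (φ : Multiset (List (Edge d)) → 𝕜) : Prop :=
  ∀ (s₀ : Multiset (List (Edge d))) (π₁ π₂ : List (Edge d)) (e : Edge d),
    IsStringM s₀ → IsLoop (π₁ ++ e :: erev e :: π₂) →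
    φ ((π₁ ++ e :: erev e :: π₂) ::ₘ s₀) =
      φ (if π₁ ++ π₂ = ([] : List (Edge d)) then s₀ else (π₁ ++ π₂) ::ₘ s₀)

section GetCompat

/-- Compatibility: optional indexing of a list. -/
abbrev List.get? {α : Type*} (l : List α) (n : ℕ) : Option α := l[n]?

theorem List.get?_eq_getElem? {α : Type*} (l : List α) (n : ℕ) : l.get? n = l[n]? := rfl

theorem List.get?_eq_some {α : Type*} {l : List α} {n : ℕ} {a : α} :
    l.get? n = some a ↔ ∃ h : n < l.length, l.get ⟨n, h⟩ = a := by
  simp [List.getElem?_eq_some_iff]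

theorem List.get?_eq_get {α : Type*} {l : List α} {n : ℕ} (h : n < l.length) :
    l.get? n = some (l.get ⟨n, h⟩) := by simp [h]

theorem List.get?_zero {α : Type*} (l : List α) : l.get? 0 = l.head? := by
  cases l <;> rfl

theorem List.get?_drop {α : Type*} (L : List α) (i j : ℕ) :
    (L.drop i).get? j = L.get? (i + j) := List.getElem?_drop

theorem List.get?_mem {α : Type*} {l : List α} {n : ℕ} {a : α} (h : l.get? n = some a) :
    a ∈ l := List.mem_of_getElem? h

end GetCompat

section AuxDev
variable {d : ℕ}

/-- Linearly reduced loop: no backtrack `a, a⁻¹` at consecutive positions. -/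
def Red {d : ℕ} (l : List (Edge d)) : Prop := List.Chain' (fun a b => b ≠ erev a) l

/-- Reduced string: a string all of whose loops are linearly reduced. -/
def RedS {d : ℕ} (s : Multiset (List (Edge d))) : Prop := IsStringM s ∧ ∀ l ∈ s, Red l

/-- The per-loop weight. -/
def vfun (Λ : ℝ) (m : ℕ) : ℝ := Λ ^ m / (max (m : ℝ) 1) ^ 10

/-- The weight of a string. -/
def wfun (Λ : ℝ) {d : ℕ} (s : Multiset (List (Edge d))) : ℝ :=
  ((s.map fun l => vfun Λ l.length).prod)

lemma latticeEdge_ne {e : Edge d} (h : IsLatticeEdge e) : e.1 ≠ e.2 := by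
  rcases h with ⟨i, h | h⟩ <;> intro hx
  · have := congrFun (hx ▸ h) i
    simp at this
  · have := congrFun (hx ▸ h) i
    simp at this

section Arith
variable {L Λ : ℝ} (hL : 1 ≤ L) (hΛ : L * 59049 ≤ Λ)

include hL hΛ

lemma lam_ge : (59049 : ℝ) ≤ Λ := le_trans (by nlinarith) hΛ

lemma lam_pos : (0:ℝ) < Λ := lt_of_lt_of_le (by norm_num) (lam_ge hL hΛ)

lemma lam_one : (1:ℝ) ≤ Λ := le_trans (by norm_num) (lam_ge hL hΛ)

omit hL hΛ

lemma mx_pos (m : ℕ) : (0:ℝ) < max (m:ℝ) 1 := lt_of_lt_of_le one_pos (le_max_right _ _)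

lemma vfun_pos (hΛ0 : 0 < Λ) (m : ℕ) : 0 < vfun Λ m :=
  div_pos (pow_pos hΛ0 m) (pow_pos (mx_pos m) _)

lemma mx_eq (m : ℕ) (h : 1 ≤ m) : max (m:ℝ) 1 = (m:ℝ) := by
  have : (1:ℝ) ≤ (m:ℝ) := by exact_mod_cast h
  simp [max_eq_left this]

include hL hΛ


/-- A priori comparison: `L^m ≤ v(m)`. -/
lemma le_vfun (m : ℕ) : L ^ m ≤ vfun Λ m := by
  have hL0 : (0:ℝ) < L := lt_of_lt_of_le one_pos hL
  have hm3 : max (m:ℝ) 1 ≤ (3:ℝ) ^ m := by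
    rcases Nat.eq_zero_or_pos m with h | h
    · subst h; norm_num
    · rw [mx_eq m h]
      calc (m:ℝ) ≤ 2 ^ m := by exact_mod_cast (Nat.lt_two_pow_self (n := m)).le
        _ ≤ 3 ^ m := pow_le_pow_left₀ (by norm_num) (by norm_num) m
  rw [vfun, le_div_iff₀ (pow_pos (mx_pos m) _)]
  have e1 : (L * (3:ℝ)^10)^m = L ^ m * ((3:ℝ)^m)^10 := by
    rw [mul_pow, ← pow_mul, ← pow_mul, Nat.mul_comm]
  calc L ^ m * (max (m:ℝ) 1) ^ 10 ≤ L ^ m * ((3:ℝ)^m)^10 := by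
        have := pow_le_pow_left₀ (le_of_lt (mx_pos m)) hm3 10
        exact mul_le_mul_of_nonneg_left this (by positivity)
    _ = (L * (3:ℝ)^10)^m := e1.symm
    _ ≤ Λ ^ m := by
        apply pow_le_pow_left₀ (by positivity)
        nlinarith

/-- Monotonicity in steps of two: `v(m) ≤ v(m+2)`. -/
lemma vfun_step (m : ℕ) : vfun Λ m ≤ vfun Λ (m + 2) := by
  have hΛ0 := lam_pos hL hΛ
  have h3 : (59049:ℝ) ≤ Λ := lam_ge hL hΛ
  rw [vfun, vfun, div_le_div_iff₀ (pow_pos (mx_pos m) _) (pow_pos (mx_pos (m+2)) _)]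
  push_cast
  have hmx : ((m:ℝ) + 2) ⊔ 1 ≤ 3 * ((m:ℝ) ⊔ 1) := by
    rcases Nat.eq_zero_or_pos m with h | h
    · subst h; push_cast; rw [show ((0:ℝ)+2) ⊔ 1 = 2 by norm_num]; norm_num
    · have h1 : (1:ℝ) ≤ (m:ℝ) := by exact_mod_cast h
      rw [max_eq_left (by linarith), max_eq_left h1]; linarith
  have h0 : (0:ℝ) ≤ ((m:ℝ) + 2) ⊔ 1 := le_trans zero_le_one (le_max_right _ _)
  calc Λ ^ m * (((m:ℝ) + 2) ⊔ 1) ^ 10 ≤ Λ ^ m * (3 * ((m:ℝ) ⊔ 1)) ^ 10 := by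
        have := pow_le_pow_left₀ h0 hmx 10
        exact mul_le_mul_of_nonneg_left this (by positivity)
    _ = (3:ℝ)^10 * (Λ ^ m * ((m:ℝ) ⊔ 1) ^ 10) := by ring
    _ ≤ Λ^2 * (Λ ^ m * ((m:ℝ) ⊔ 1) ^ 10) := by
        have : (3:ℝ)^10 ≤ Λ ^ 2 := by nlinarith
        have hnn : (0:ℝ) ≤ Λ ^ m * ((m:ℝ) ⊔ 1) ^ 10 := by positivity
        exact mul_le_mul_of_nonneg_right this hnn
    _ = Λ ^ (m + 2) * ((m:ℝ) ⊔ 1) ^ 10 := by ring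

lemma one_le_vfun_two : (1:ℝ) ≤ vfun Λ 2 := by
  have h := vfun_step hL hΛ 0
  simpa [vfun] using h

/-- Deformation comparison: `v(m+2) ≤ Λ² v(m)` . -/
lemma vfun_def2 (m : ℕ) : vfun Λ (m + 2) ≤ Λ ^ 2 * vfun Λ m := by
  have hΛ0 := lam_pos hL hΛ
  have hmx : (max (m:ℝ) 1) ^ 10 ≤ (max ((m+2:ℕ):ℝ) 1) ^ 10 := by
    apply pow_le_pow_left₀ (le_of_lt (mx_pos m))
    apply max_le_max _ le_rfl
    push_cast; linarith
  have e1 : vfun Λ (m+2) = (Λ^2 * Λ^m) / (max ((m+2:ℕ):ℝ) 1) ^ 10 := by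
    rw [vfun, pow_add]; ring
  have e2 : Λ ^ 2 * vfun Λ m = (Λ^2 * Λ^m) / (max (m:ℝ) 1) ^ 10 := by
    rw [vfun]; ring
  rw [e1, e2]
  apply div_le_div_of_nonneg_left (by positivity) (pow_pos (mx_pos m) _) hmx

lemma vfun_def4 (m : ℕ) : vfun Λ (m + 4) ≤ Λ ^ 4 * vfun Λ m := by
  have hΛ0 := lam_pos hL hΛ
  have h1 := vfun_def2 hL hΛ (m + 2)
  have h2 := vfun_def2 hL hΛ m
  have h3 : (m + 2) + 2 = m + 4 := by ring
  rw [h3] at h1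
  calc vfun Λ (m+4) ≤ Λ^2 * vfun Λ (m+2) := h1
    _ ≤ Λ^2 * (Λ^2 * vfun Λ m) := by
        apply mul_le_mul_of_nonneg_left h2 (by positivity)
    _ = Λ^4 * vfun Λ m := by ring

end Arith
end AuxDev

section Arith2
variable {L Λ : ℝ} (hL : 1 ≤ L) (hΛ : L * 59049 ≤ Λ)
include hL hΛ

/-- helper: ordered version of the positive-splitting weight bound. -/
lemma vfun_split_pos' {a b m : ℕ} (ha : 3 ≤ a) (hab : a ≤ b) (hm : a + b = m) :
    vfun Λ a * vfun Λ b ≤ (1/4) * (1/(a:ℝ)^2 + 1/(b:ℝ)^2) * vfun Λ m := by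
  have hΛ0 := lam_pos hL hΛ
  have ha1 : (1:ℕ) ≤ a := le_trans (by norm_num) ha
  have hb1 : (1:ℕ) ≤ b := le_trans ha1 hab
  have hm1 : (1:ℕ) ≤ m := by omega
  have haR : (3:ℝ) ≤ (a:ℝ) := by exact_mod_cast ha
  have hbR : (a:ℝ) ≤ (b:ℝ) := by exact_mod_cast hab
  have hmR : (m:ℝ) = (a:ℝ) + (b:ℝ) := by exact_mod_cast hm.symm
  have ha0 : (0:ℝ) < a := by linarith
  have hb0 : (0:ℝ) < b := by linarith
  have hm0 : (0:ℝ) < m := by rw [hmR]; linarith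
  rw [vfun, vfun, vfun, mx_eq a ha1, mx_eq b hb1, mx_eq m hm1]
  have key : 4 * (m:ℝ)^10 ≤ (a:ℝ)^8 * (b:ℝ)^10 := by
    have h1 : (m:ℝ) ≤ 2 * b := by rw [hmR]; linarith
    have h2 : (m:ℝ)^10 ≤ (2*(b:ℝ))^10 := pow_le_pow_left₀ (le_of_lt hm0) h1 10
    have h3 : (3:ℝ)^8 ≤ (a:ℝ)^8 := pow_le_pow_left₀ (by norm_num) haR 8
    have h4 : (0:ℝ) < (b:ℝ)^10 := by positivity
    nlinarith [pow_pos hb0 10]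
  -- LHS = Λ^a Λ^b/(a^10 b^10) = Λ^m / (a^10 b^10)
  have e1 : Λ ^ a / (a:ℝ)^10 * (Λ ^ b / (b:ℝ)^10) = Λ ^ m / ((a:ℝ)^10 * (b:ℝ)^10) := by
    rw [← hm, pow_add, div_mul_div_comm]
  rw [e1]
  have step1 : Λ ^ m / ((a:ℝ)^10 * (b:ℝ)^10) ≤ Λ ^ m / (4 * (a:ℝ)^2 * (m:ℝ)^10) := by
    apply div_le_div_of_nonneg_left (by positivity) (by positivity)
    calc 4 * (a:ℝ)^2 * (m:ℝ)^10 = (a:ℝ)^2 * (4 * (m:ℝ)^10) := by ring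
      _ ≤ (a:ℝ)^2 * ((a:ℝ)^8 * (b:ℝ)^10) := by
          exact mul_le_mul_of_nonneg_left key (by positivity)
      _ = (a:ℝ)^10 * (b:ℝ)^10 := by ring
  refine le_trans step1 ?_
  have : Λ ^ m / (4 * (a:ℝ)^2 * (m:ℝ)^10) = (1/4) * (1/(a:ℝ)^2) * (Λ ^ m / (m:ℝ)^10) := by
    field_simp
    all_goals ring
  rw [this]
  have hnn : (0:ℝ) ≤ Λ ^ m / (m:ℝ)^10 := by positivity
  have : (1/4) * (1/(a:ℝ)^2) ≤ (1/4) * (1/(a:ℝ)^2 + 1/(b:ℝ)^2) := by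
    have : (0:ℝ) ≤ 1/(b:ℝ)^2 := by positivity
    linarith
  exact mul_le_mul_of_nonneg_right this hnn

/-- Positive-splitting weight bound: `a+b = m`, both parts `≥ 3`. -/
lemma vfun_split_pos {a b m : ℕ} (ha : 3 ≤ a) (hb : 3 ≤ b) (hm : a + b = m) :
    vfun Λ a * vfun Λ b ≤ (1/4) * (1/(a:ℝ)^2 + 1/(b:ℝ)^2) * vfun Λ m := by
  rcases le_total a b with h | h
  · exact vfun_split_pos' hL hΛ ha h hm
  · have hba : b + a = m := by omega
    have := vfun_split_pos' hL hΛ hb h hba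
    calc vfun Λ a * vfun Λ b = vfun Λ b * vfun Λ a := by ring
      _ ≤ (1/4) * (1/(b:ℝ)^2 + 1/(a:ℝ)^2) * vfun Λ m := this
      _ = (1/4) * (1/(a:ℝ)^2 + 1/(b:ℝ)^2) * vfun Λ m := by ring

lemma vfun_split_neg' {a b m : ℕ} (ha : 3 ≤ a) (hab : a ≤ b) (hm : a + b + 2 = m) :
    vfun Λ a * vfun Λ b ≤ (9/Λ^2) * (1/(a:ℝ)^2 + 1/(b:ℝ)^2) * vfun Λ m := by
  have hΛ0 := lam_pos hL hΛ
  have ha1 : (1:ℕ) ≤ a := by omega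
  have hb1 : (1:ℕ) ≤ b := by omega
  have hm1 : (1:ℕ) ≤ m := by omega
  have haR : (3:ℝ) ≤ (a:ℝ) := by exact_mod_cast ha
  have hbR : (a:ℝ) ≤ (b:ℝ) := by exact_mod_cast hab
  have hmR : (m:ℝ) = (a:ℝ) + (b:ℝ) + 2 := by exact_mod_cast hm.symm
  have ha0 : (0:ℝ) < a := by linarith
  have hb0 : (0:ℝ) < b := by linarith
  have hm0 : (0:ℝ) < m := by rw [hmR]; linarith
  rw [vfun, vfun, vfun, mx_eq a ha1, mx_eq b hb1, mx_eq m hm1]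
  have key : (m:ℝ)^10 ≤ 9 * ((a:ℝ)^8 * (b:ℝ)^10) := by
    have h1 : (m:ℝ) ≤ 3 * b := by rw [hmR]; linarith
    have h2 : (m:ℝ)^10 ≤ (3*(b:ℝ))^10 := pow_le_pow_left₀ (le_of_lt hm0) h1 10
    have h3 : (3:ℝ)^8 ≤ (a:ℝ)^8 := pow_le_pow_left₀ (by norm_num) haR 8
    nlinarith [pow_pos hb0 10]
  have e1 : Λ ^ a / (a:ℝ)^10 * (Λ ^ b / (b:ℝ)^10) = (Λ ^ m / Λ^2) / ((a:ℝ)^10 * (b:ℝ)^10) := by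
    have h0 : Λ ^ m = Λ ^ a * Λ ^ b * Λ ^ 2 := by rw [← hm, pow_add, pow_add]
    have hΛ2 : Λ ^ 2 ≠ 0 := by positivity
    rw [h0]
    field_simp
    all_goals ring
  rw [e1]
  have step1 : (Λ ^ m / Λ^2) / ((a:ℝ)^10 * (b:ℝ)^10)
      ≤ (Λ ^ m / Λ^2) / ((1/9) * (a:ℝ)^2 * (m:ℝ)^10) := by
    apply div_le_div_of_nonneg_left (by positivity) (by positivity)
    calc (1/9) * (a:ℝ)^2 * (m:ℝ)^10 ≤ (1/9) * (a:ℝ)^2 * (9 * ((a:ℝ)^8 * (b:ℝ)^10)) := by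
          exact mul_le_mul_of_nonneg_left key (by positivity)
      _ = (a:ℝ)^10 * (b:ℝ)^10 := by ring
  refine le_trans step1 ?_
  have e2 : (Λ ^ m / Λ^2) / ((1/9) * (a:ℝ)^2 * (m:ℝ)^10)
      = (9/Λ^2) * (1/(a:ℝ)^2) * (Λ ^ m / (m:ℝ)^10) := by
    field_simp
  rw [e2]
  have hnn : (0:ℝ) ≤ Λ ^ m / (m:ℝ)^10 := by positivity
  have : (9/Λ^2) * (1/(a:ℝ)^2) ≤ (9/Λ^2) * (1/(a:ℝ)^2 + 1/(b:ℝ)^2) := by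
    have h1 : (0:ℝ) ≤ 1/(b:ℝ)^2 := by positivity
    have h2 : (0:ℝ) ≤ 9/Λ^2 := by positivity
    nlinarith
  exact mul_le_mul_of_nonneg_right this hnn

lemma vfun_split_neg {a b m : ℕ} (ha : 3 ≤ a) (hb : 3 ≤ b) (hm : a + b + 2 = m) :
    vfun Λ a * vfun Λ b ≤ (9/Λ^2) * (1/(a:ℝ)^2 + 1/(b:ℝ)^2) * vfun Λ m := by
  rcases le_total a b with h | h
  · exact vfun_split_neg' hL hΛ ha h hm
  · have hba : b + a + 2 = m := by omega
    have := vfun_split_neg' hL hΛ hb h hba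
    calc vfun Λ a * vfun Λ b = vfun Λ b * vfun Λ a := by ring
      _ ≤ (9/Λ^2) * (1/(b:ℝ)^2 + 1/(a:ℝ)^2) * vfun Λ m := this
      _ = (9/Λ^2) * (1/(a:ℝ)^2 + 1/(b:ℝ)^2) * vfun Λ m := by ring

/-- Boundary negative-splitting bound: single part of size `m-2 ≥ 3`. -/
lemma vfun_single_neg {a m : ℕ} (ha : 3 ≤ a) (hm : a + 2 = m) :
    vfun Λ a ≤ (1024/Λ^2) * vfun Λ m := by
  have hΛ0 := lam_pos hL hΛ
  have ha1 : (1:ℕ) ≤ a := by omega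
  have hm1 : (1:ℕ) ≤ m := by omega
  have haR : (3:ℝ) ≤ (a:ℝ) := by exact_mod_cast ha
  have hmR : (m:ℝ) = (a:ℝ) + 2 := by exact_mod_cast hm.symm
  have ha0 : (0:ℝ) < a := by linarith
  have hm0 : (0:ℝ) < m := by rw [hmR]; linarith
  rw [vfun, vfun, mx_eq a ha1, mx_eq m hm1]
  have key : (m:ℝ)^10 ≤ 1024 * (a:ℝ)^10 := by
    have h1 : (m:ℝ) ≤ 2 * a := by rw [hmR]; linarith
    have h2 : (m:ℝ)^10 ≤ (2*(a:ℝ))^10 := pow_le_pow_left₀ (le_of_lt hm0) h1 10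
    nlinarith
  have e1 : Λ ^ a / (a:ℝ)^10 = (Λ^m/Λ^2) / (a:ℝ)^10 := by
    have : Λ ^ m = Λ ^ a * Λ ^ 2 := by rw [← hm, pow_add]
    rw [this]; field_simp
  rw [e1]
  have step1 : (Λ^m/Λ^2) / (a:ℝ)^10 ≤ (Λ^m/Λ^2) / ((1/1024) * (m:ℝ)^10) := by
    apply div_le_div_of_nonneg_left (by positivity) (by positivity)
    nlinarith [pow_pos ha0 10, pow_pos hm0 10]
  refine le_trans step1 (le_of_eq ?_)
  field_simp

end Arith2

section SumLemmas

/-- Telescoping bound `∑_{j=3}^{M} 1/j² ≤ 1/2`. -/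
lemma sum_inv_sq_le (M : ℕ) : ∑ j ∈ Finset.Icc 3 M, (1:ℝ)/(j:ℝ)^2 ≤ 1/2 := by
  have key : ∀ N : ℕ, 2 ≤ N → ∑ j ∈ Finset.Icc 3 N, (1:ℝ)/(j:ℝ)^2 ≤ 1/2 - 1/(N:ℝ) := by
    intro N hN
    induction N with
    | zero => omega
    | succ n ih =>
      rcases Nat.lt_or_ge n 2 with h | h
      · interval_cases n
        · omega
        · simp
      · have h3 : 3 ≤ n + 1 := by omega
        rw [← Finset.insert_Icc_right_eq_Icc_add_one h3, Finset.sum_insert (by simp)]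
        have hn0 : (0:ℝ) < n := by exact_mod_cast (by omega : 0 < n)
        have hn1 : (0:ℝ) < (n:ℝ) + 1 := by linarith
        have ihn := ih h
        push_cast
        have : (1:ℝ)/((n:ℝ)+1)^2 ≤ 1/(n:ℝ) - 1/((n:ℝ)+1) := by
          rw [div_sub_div _ _ (ne_of_gt hn0) (ne_of_gt hn1)]
          have e : (1:ℝ) * ((n:ℝ)+1) - (n:ℝ)*1 = 1 := by ring
          rw [e]
          apply div_le_div_of_nonneg_left (by norm_num) (by positivity)
          nlinarith
        push_cast at ihn
        linarith
  rcases Nat.lt_or_ge M 2 with h | h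
  · interval_cases M <;> simp
  · have := key M h
    have hM0 : (0:ℝ) < M := by exact_mod_cast (by omega : 0 < M)
    have : (0:ℝ) < 1/(M:ℝ) := by positivity
    linarith [key M h]

/-- Sum over an image is at most the sum over the source, for nonnegative functions. -/
lemma sum_image_le_nonneg {α β : Type*} [DecidableEq β] {F : Finset α} (G : α → β)
    (g : β → ℝ) (hg : ∀ b, 0 ≤ g b) :
    ∑ x ∈ F.image G, g x ≤ ∑ a ∈ F, g (G a) := by
  classical
  induction F using Finset.induction with
  | empty => simp
  | @insert a F ha ih =>
    rw [Finset.image_insert, Finset.sum_insert ha]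
    by_cases h : G a ∈ F.image G
    · rw [Finset.insert_eq_self.mpr h]
      have := hg (G a)
      linarith
    · rw [Finset.sum_insert h]
      linarith

end SumLemmas

section Weights
variable {d : ℕ} {L Λ : ℝ}

lemma wfun_zero : wfun Λ (0 : Multiset (List (Edge d))) = 1 := by simp [wfun]

lemma wfun_cons (l : List (Edge d)) (s : Multiset (List (Edge d))) :
    wfun Λ (l ::ₘ s) = vfun Λ l.length * wfun Λ s := by simp [wfun]

lemma wfun_add (s t : Multiset (List (Edge d))) :
    wfun Λ (s + t) = wfun Λ s * wfun Λ t := by simp [wfun]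

lemma wfun_pos (hΛ0 : 0 < Λ) (s : Multiset (List (Edge d))) : 0 < wfun Λ s := by
  induction s using Multiset.induction with
  | empty => simp [wfun]
  | cons l s ih => rw [wfun_cons]; exact mul_pos (vfun_pos hΛ0 _) ih

lemma strLenM_zero : strLenM (0 : Multiset (List (Edge d))) = 0 := by simp [strLenM]

lemma strLenM_cons (l : List (Edge d)) (s : Multiset (List (Edge d))) :
    strLenM (l ::ₘ s) = l.length + strLenM s := by simp [strLenM]

variable (hL : 1 ≤ L) (hΛ : L * 59049 ≤ Λ)
include hL hΛ

lemma pow_strLen_le_wfun (s : Multiset (List (Edge d))) :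
    L ^ strLenM s ≤ wfun Λ s := by
  induction s using Multiset.induction with
  | empty => simp [wfun_zero, strLenM_zero]
  | cons l s ih =>
    rw [wfun_cons, strLenM_cons, pow_add]
    have h1 := le_vfun hL hΛ (m := l.length)
    have hL0 : (0:ℝ) < L := lt_of_lt_of_le one_pos hL
    exact mul_le_mul h1 ih (by positivity) (le_of_lt (vfun_pos (lam_pos hL hΛ) _))

end Weights

section ListFacts
variable {d : ℕ}

lemma IsStringM.erase {s : Multiset (List (Edge d))} (h : IsStringM s)
    (l : List (Edge d)) : IsStringM (s.erase l) :=
  fun x hx => h x (Multiset.mem_of_mem_erase hx)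

lemma chain_get {l : List (Edge d)}
    (h : List.Chain' (fun a b => a.2 = b.1) l) {j : ℕ} {x y : Edge d}
    (hx : l.get? j = some x) (hy : l.get? (j+1) = some y) : x.2 = y.1 := by
  obtain ⟨hj, hxe⟩ := List.get?_eq_some.mp hx
  obtain ⟨hj1, hye⟩ := List.get?_eq_some.mp hy
  have h2 := List.isChain_iff_getElem.mp h j (by omega)
  rw [← hxe, ← hye]
  exact h2

lemma red_get {l : List (Edge d)} (h : Red l) {j : ℕ} {x y : Edge d}
    (hx : l.get? j = some x) (hy : l.get? (j+1) = some y) : y ≠ erev x := by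
  obtain ⟨hj, hxe⟩ := List.get?_eq_some.mp hx
  obtain ⟨hj1, hye⟩ := List.get?_eq_some.mp hy
  have h2 := List.isChain_iff_getElem.mp h j (by omega)
  rw [← hxe, ← hye]
  exact h2

lemma loop_wrap {l : List (Edge d)} (hl : IsLoop l) {x y : Edge d}
    (hx : l.get? 0 = some x) (hy : l.get? (l.length - 1) = some y) : y.2 = x.1 := by
  have h1 : l.head? = some x := by
    cases l with
    | nil => simp at hx
    | cons a t => simpa using hx
  have h2 : l.getLast? = some y := by
    rw [List.getLast?_eq_getElem?, ← List.get?_eq_getElem?]; exact hy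
  exact hl.2.2 x h1 y h2

/-- A loop starting with a lattice edge has at least two edges. -/
lemma loop_tail_ne {e : Edge d} {t : List (Edge d)} (hl : IsLoop (e :: t)) : t ≠ [] := by
  intro h
  subst h
  have := hl.2.2 e rfl e rfl
  exact latticeEdge_ne (hl.1 e (by simp)) this.symm

lemma get?_cons_succ' {e : Edge d} (t : List (Edge d)) (j : ℕ) :
    (e :: t).get? (j+1) = t.get? j := rfl

lemma get?_some_of_lt (t : List (Edge d)) {j : ℕ} (h : j < t.length) :
    ∃ x, t.get? j = some x := ⟨t.get ⟨j, h⟩, List.get?_eq_get h⟩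

/-- Position bounds for a positive splitting in a reduced loop. -/
lemma splus_bounds {e : Edge d} {t : List (Edge d)} (hl : IsLoop (e :: t))
    (hr : Red (e :: t)) {k : ℕ} (hk : t.get? k = some e) :
    2 ≤ k ∧ k + 3 ≤ t.length := by
  have hklen : k < t.length := (List.get?_eq_some.mp hk).1
  have hch := hl.2.1
  have hne : e.1 ≠ e.2 := latticeEdge_ne (hl.1 e (by simp))
  have h0 : (e :: t).get? 0 = some e := rfl
  have hk0 : k ≠ 0 := by
    intro h; subst h
    exact hne (chain_get hch h0 (show (e::t).get? 1 = some e from hk)).symm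
  have hk1 : k ≠ 1 := by
    intro h; subst h
    obtain ⟨x, hx⟩ := get?_some_of_lt t (show 0 < t.length by omega)
    have c1 : e.2 = x.1 := chain_get hch h0 (show (e::t).get? 1 = some x from hx)
    have c2 : x.2 = e.1 :=
      chain_get hch (show (e::t).get? 1 = some x from hx) (show (e::t).get? 2 = some e from hk)
    have hxr : x = erev e := Prod.ext c1.symm c2
    exact red_get hr h0 (show (e::t).get? 1 = some x from hx) hxr
  have hk2 : k + 1 ≠ t.length := by
    intro h
    have hy : (e::t).get? ((e::t).length - 1) = some e := by
      have : (e::t).length - 1 = k + 1 := by simp; omega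
      rw [this]; exact hk
    exact hne (loop_wrap hl h0 hy).symm
  have hk3 : k + 2 ≠ t.length := by
    intro h
    obtain ⟨y, hy⟩ := get?_some_of_lt t (show k + 1 < t.length by omega)
    have c1 : e.2 = y.1 :=
      chain_get hch (show (e::t).get? (k+1) = some e from hk)
        (show (e::t).get? (k+2) = some y from hy)
    have c2 : y.2 = e.1 := by
      apply loop_wrap hl h0
      have : (e::t).length - 1 = k + 2 := by simp; omega
      rw [this]; exact hy
    have : y = erev e := Prod.ext c1.symm c2
    exact red_get hr (show (e::t).get? (k+1) = some e from hk)
      (show (e::t).get? (k+2) = some y from hy) this |>.elim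
  omega

/-- Position bounds for a negative splitting in a reduced loop. -/
lemma sminus_bounds {e : Edge d} {t : List (Edge d)} (hl : IsLoop (e :: t))
    (hr : Red (e :: t)) {k : ℕ} (hk : t.get? k = some (erev e)) :
    3 ≤ k ∧ (k + 1 = t.length ∨ k + 4 ≤ t.length) := by
  have hklen : k < t.length := (List.get?_eq_some.mp hk).1
  have hch := hl.2.1
  have hne : e.1 ≠ e.2 := latticeEdge_ne (hl.1 e (by simp))
  have h0 : (e :: t).get? 0 = some e := rfl
  have hk0 : k ≠ 0 := by
    intro h; subst h
    exact red_get hr h0 (show (e::t).get? 1 = some (erev e) from hk) rfl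
  have hk1 : k ≠ 1 := by
    intro h; subst h
    obtain ⟨x, hx⟩ := get?_some_of_lt t (show 0 < t.length by omega)
    have c1 : e.2 = x.1 := chain_get hch h0 (show (e::t).get? 1 = some x from hx)
    have c2 : x.2 = (erev e).1 :=
      chain_get hch (show (e::t).get? 1 = some x from hx)
        (show (e::t).get? 2 = some (erev e) from hk)
    have hxmem : x ∈ (e :: t) := List.get?_mem (show (e::t).get? 1 = some x from hx)
    have c2' : x.2 = e.2 := c2
    exact latticeEdge_ne (hl.1 x hxmem) (by rw [c2', ← c1])
  have hk2 : k ≠ 2 := by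
    intro h; subst h
    obtain ⟨x, hx⟩ := get?_some_of_lt t (show 0 < t.length by omega)
    obtain ⟨y, hy⟩ := get?_some_of_lt t (show 1 < t.length by omega)
    have c1 : e.2 = x.1 := chain_get hch h0 (show (e::t).get? 1 = some x from hx)
    have c2 : x.2 = y.1 :=
      chain_get hch (show (e::t).get? 1 = some x from hx)
        (show (e::t).get? 2 = some y from hy)
    have c3 : y.2 = (erev e).1 :=
      chain_get hch (show (e::t).get? 2 = some y from hy)
        (show (e::t).get? 3 = some (erev e) from hk)
    have : y = erev x := Prod.ext c2.symm (by show y.2 = x.1; rw [c3]; exact c1)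
    exact red_get hr (show (e::t).get? 1 = some x from hx)
      (show (e::t).get? 2 = some y from hy) this
  by_cases hend : k + 1 = t.length
  · exact ⟨by omega, Or.inl hend⟩
  have hk3 : k + 2 ≠ t.length := by
    intro h
    obtain ⟨z, hz⟩ := get?_some_of_lt t (show k + 1 < t.length by omega)
    have c1 : (erev e).2 = z.1 :=
      chain_get hch (show (e::t).get? (k+1) = some (erev e) from hk)
        (show (e::t).get? (k+2) = some z from hz)
    have c2 : z.2 = e.1 := by
      apply loop_wrap hl h0
      have : (e::t).length - 1 = k + 2 := by simp; omega
      rw [this]; exact hz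
    have hzmem : z ∈ (e :: t) := List.get?_mem (show (e::t).get? (k+2) = some z from hz)
    apply latticeEdge_ne (hl.1 z hzmem)
    show z.1 = z.2
    have c1' : e.1 = z.1 := c1
    rw [← c1', c2]
  have hk4 : k + 3 ≠ t.length := by
    intro h
    obtain ⟨z1, hz1⟩ := get?_some_of_lt t (show k + 1 < t.length by omega)
    obtain ⟨z2, hz2⟩ := get?_some_of_lt t (show k + 2 < t.length by omega)
    have c1 : (erev e).2 = z1.1 :=
      chain_get hch (show (e::t).get? (k+1) = some (erev e) from hk)
        (show (e::t).get? (k+2) = some z1 from hz1)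
    have c2 : z1.2 = z2.1 :=
      chain_get hch (show (e::t).get? (k+2) = some z1 from hz1)
        (show (e::t).get? (k+3) = some z2 from hz2)
    have c3 : z2.2 = e.1 := by
      apply loop_wrap hl h0
      have : (e::t).length - 1 = k + 3 := by simp; omega
      rw [this]; exact hz2
    have : z2 = erev z1 := Prod.ext c2.symm (by show z2.2 = z1.1; rw [c3]; exact c1)
    exact red_get hr (show (e::t).get? (k+2) = some z1 from hz1)
      (show (e::t).get? (k+3) = some z2 from hz2) this
  exact ⟨by omega, Or.inr (by omega)⟩

end ListFacts

section Erasure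
variable {d : ℕ}

lemma isLoop_erase_backtrack {π₁ π₂ : List (Edge d)} {x : Edge d}
    (hl : IsLoop (π₁ ++ x :: erev x :: π₂)) (hne : π₁ ++ π₂ ≠ []) :
    IsLoop (π₁ ++ π₂) := by
  obtain ⟨hlat, hch, hwr⟩ := hl
  obtain ⟨hc1, hc2, hlink⟩ := List.isChain_append.mp hch
  have hcx : List.Chain' (fun a b => a.2 = b.1) (erev x :: π₂) := hc2.tail
  have hc3 : List.Chain' (fun a b => a.2 = b.1) π₂ := hcx.tail
  have hhead2 : ∀ y ∈ π₂.head?, x.1 = y.1 := by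
    intro y hy
    exact (List.isChain_cons.mp hcx).1 y hy
  refine ⟨?_, ?_, ?_⟩
  · intro a ha
    apply hlat
    rcases List.mem_append.mp ha with h | h
    · exact List.mem_append.mpr (Or.inl h)
    · exact List.mem_append.mpr (Or.inr (by simp [h]))
  · apply List.isChain_append.mpr
    refine ⟨hc1, hc3, ?_⟩
    intro a ha y hy
    have h1 : a.2 = x.1 := hlink a ha x rfl
    rw [h1]; exact hhead2 y hy
  · intro a ha f hf
    by_cases h1 : π₁ = []
    · subst h1
      simp only [List.nil_append] at ha hf hne ⊢
      have hlast : (x :: erev x :: π₂).getLast? = π₂.getLast? := by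
        rw [show x :: erev x :: π₂ = [x, erev x] ++ π₂ by simp,
          List.getLast?_append_of_ne_nil _ hne]
      have hf2 : f.2 = x.1 := hwr x rfl f (by rw [List.nil_append, hlast]; exact hf)
      rw [hf2]; exact hhead2 a ha
    · have hh : (π₁ ++ π₂).head? = π₁.head? := List.head?_append_of_ne_nil _ h1
      have hhbig : (π₁ ++ x :: erev x :: π₂).head? = π₁.head? :=
        List.head?_append_of_ne_nil _ h1
      by_cases h2 : π₂ = []
      · subst h2
        -- new loop is π₁, big last is erev x
        have hlastbig : (π₁ ++ x :: erev x :: []).getLast? = some (erev x) := by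
          rw [List.getLast?_append_of_ne_nil _ (by simp)]; rfl
        have hf1 : f ∈ π₁.getLast? := by rwa [List.append_nil] at hf
        have hfx : f.2 = x.1 := hlink f hf1 x rfl
        have hmem1 : a ∈ (π₁ ++ x :: erev x :: []).head? := by
          rw [hhbig]
          rw [hh] at ha
          exact ha
        have hmem2 : erev x ∈ (π₁ ++ x :: erev x :: []).getLast? := by
          rw [hlastbig]; rfl
        have hxa : (erev x).2 = a.1 := hwr a hmem1 (erev x) hmem2
        rw [hfx]; exact hxa
      · have hlast : (π₁ ++ π₂).getLast? = π₂.getLast? :=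
          List.getLast?_append_of_ne_nil _ h2
        have hlastbig : (π₁ ++ x :: erev x :: π₂).getLast? = π₂.getLast? := by
          rw [List.getLast?_append_of_ne_nil _ (by simp),
            show x :: erev x :: π₂ = [x, erev x] ++ π₂ by simp,
            List.getLast?_append_of_ne_nil _ h2]
        have hmem1 : a ∈ (π₁ ++ x :: erev x :: π₂).head? := by
          rw [hhbig]; rw [hh] at ha; exact ha
        have hmem2 : f ∈ (π₁ ++ x :: erev x :: π₂).getLast? := by
          rw [hlastbig]; rw [hlast] at hf; exact hf
        exact hwr a hmem1 f hmem2

lemma not_red_decomp {l : List (Edge d)} (h : ¬ Red l) :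
    ∃ (π₁ π₂ : List (Edge d)) (x : Edge d), l = π₁ ++ x :: erev x :: π₂ ∧
      π₁.length + π₂.length + 2 = l.length := by
  unfold Red List.Chain' at h
  rw [List.isChain_iff_getElem] at h
  push_neg at h
  obtain ⟨i, hi, hyx⟩ := h
  have hi1 : i + 1 < l.length := by omega
  have hi0 : i < l.length := by omega
  have hyx' : l[i+1] = erev l[i] := by
    rw [← List.get_eq_getElem (l := l) (i := ⟨i+1, hi1⟩), ← List.get_eq_getElem (l := l) (i := ⟨i, hi0⟩)]
    exact hyx
  refine ⟨l.take i, l.drop (i+2), l[i], ?_, ?_⟩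
  · conv_lhs => rw [← List.take_append_drop i l]
    congr 1
    rw [List.drop_eq_getElem_cons hi0]
    congr 1
    rw [List.drop_eq_getElem_cons hi1]
    congr 1
  · rw [List.length_take, List.length_drop]
    omega

variable {L Λ : ℝ}

/-- Reduction of a string: there is a reduced string with the same value under any
backtrack-invariant function, and smaller weight. -/
lemma reduce_exists (hL : 1 ≤ L) (hΛ : L * 59049 ≤ Λ) :
    ∀ (n : ℕ) (s : Multiset (List (Edge d))), strLenM s ≤ n → IsStringM s →
    ∃ s', RedS s' ∧ wfun Λ s' ≤ wfun Λ s ∧ strLenM s' ≤ strLenM s ∧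
      (∀ (χ : Multiset (List (Edge d)) → ℝ), BacktrackInvariant χ → χ s = χ s') := by
  intro n
  induction n with
  | zero =>
    intro s hlen hs
    refine ⟨s, ⟨hs, ?_⟩, le_refl _, le_refl _, fun χ _ => rfl⟩
    intro l hls
    exfalso
    apply (hs l hls).1
    apply List.length_eq_zero_iff.mp
    have h2 : l.length ≤ strLenM s := by
      rw [← Multiset.cons_erase hls, strLenM_cons]; omega
    omega
  | succ n ih =>
    intro s hlen hs
    by_cases hred : ∀ l ∈ s, Red l
    · exact ⟨s, ⟨hs, hred⟩, le_refl _, le_refl _, fun χ _ => rfl⟩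
    · push_neg at hred
      obtain ⟨l, hls, hnred⟩ := hred
      obtain ⟨π₁, π₂, x, hdec, hlen2⟩ := not_red_decomp hnred
      have hs0 : IsStringM (s.erase l) := hs.erase l
      have hloopl : IsLoop l := (hs l hls).2
      have hse : s = l ::ₘ s.erase l := (Multiset.cons_erase hls).symm
      have hloopdec : IsLoop (π₁ ++ x :: erev x :: π₂) := hdec ▸ hloopl
      set s₁ : Multiset (List (Edge d)) :=
        if π₁ ++ π₂ = ([] : List (Edge d)) then s.erase l else (π₁ ++ π₂) ::ₘ s.erase l
        with hs₁
      have hstr1 : IsStringM s₁ := by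
        rw [hs₁]
        split_ifs with hnil
        · exact hs0
        · intro g hg
          rcases Multiset.mem_cons.mp hg with h | h
          · subst h
            exact ⟨hnil, isLoop_erase_backtrack hloopdec hnil⟩
          · exact hs0 g h
      have hld : l.length = π₁.length + π₂.length + 2 := by
        rw [hdec]; simp only [List.length_append, List.length_cons]; omega
      have hls' : strLenM s = l.length + strLenM (s.erase l) := by
        conv_lhs => rw [hse]
        rw [strLenM_cons]
      have hlen1 : strLenM s₁ + 2 = strLenM s := by
        rw [hs₁]
        split_ifs with hnil
        · have h0 : π₁.length + π₂.length = 0 := by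
            have := congrArg List.length hnil
            simpa [List.length_append] using this
          omega
        · rw [strLenM_cons]
          simp only [List.length_append]
          omega
      have hw1 : wfun Λ s₁ ≤ wfun Λ s := by
        conv_rhs => rw [hse]
        rw [wfun_cons, hs₁]
        have hwe : 0 < wfun Λ (s.erase l) := wfun_pos (lam_pos hL hΛ) _
        split_ifs with hnil
        · have h0 : π₁.length + π₂.length = 0 := by
            have := congrArg List.length hnil
            simpa [List.length_append] using this
          have hl2 : l.length = 2 := by omega
          rw [hl2]
          nlinarith [one_le_vfun_two hL hΛ]
        · rw [wfun_cons]
          have hll : (π₁ ++ π₂).length + 2 = l.length := by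
            simp only [List.length_append]; omega
          have hv : vfun Λ (π₁ ++ π₂).length ≤ vfun Λ l.length := by
            rw [← hll]; exact vfun_step hL hΛ _
          have hv0 : 0 < vfun Λ (π₁ ++ π₂).length := vfun_pos (lam_pos hL hΛ) _
          nlinarith
      have hchi : ∀ (χ : Multiset (List (Edge d)) → ℝ), BacktrackInvariant χ →
          χ s = χ s₁ := by
        intro χ hχ
        have hkey := hχ (s.erase l) π₁ π₂ x hs0 hloopdec
        have e1 : s = (π₁ ++ x :: erev x :: π₂) ::ₘ s.erase l := by
          rw [← hdec]; exact hse
        rw [hs₁]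
        conv_lhs => rw [e1]
        exact hkey
      obtain ⟨s', hred', hw', hln', hval'⟩ := ih s₁ (by omega) hstr1
      exact ⟨s', hred', le_trans hw' hw1, by omega,
        fun χ hχ => (hchi χ hχ).trans (hval' χ hχ)⟩

end Erasure

section OpLoops
variable {d : ℕ}

lemma head?_drop' (t : List (Edge d)) (n : ℕ) : (t.drop n).head? = t.get? n := by
  rw [← List.get?_zero, List.get?_drop, Nat.add_zero]

lemma getLast?_drop' {t : List (Edge d)} {n : ℕ} (h : t.drop n ≠ []) :
    (t.drop n).getLast? = t.getLast? := by
  conv_rhs => rw [← List.take_append_drop n t]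
  rw [List.getLast?_append_of_ne_nil _ h]

lemma head?_take' {t : List (Edge d)} {n : ℕ} (h : n ≠ 0) :
    (t.take n).head? = t.head? := by
  cases t with
  | nil => simp
  | cons a t' =>
    cases n with
    | zero => omega
    | succ m => rfl

lemma getLast?_take' {t : List (Edge d)} {k : ℕ} {x : Edge d} (hk : t.get? k = some x) :
    (t.take (k+1)).getLast? = some x := by
  have hk' : t[k]? = some x := by rw [← List.get?_eq_getElem?]; exact hk
  rw [List.take_succ, hk']
  simp

lemma isLoop_splus_left {e : Edge d} {t : List (Edge d)} {k : ℕ}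
    (hl : IsLoop (e :: t)) (hk : t.get? k = some e) (hlt : k + 1 < t.length) :
    IsLoop (e :: t.drop (k+1)) := by
  have hchT : List.Chain' (fun a b => a.2 = b.1) t := hl.2.1.tail
  have hdne : t.drop (k+1) ≠ [] := by
    apply List.ne_nil_of_length_pos
    rw [List.length_drop]; omega
  have htne : t ≠ [] := by
    apply List.ne_nil_of_length_pos; omega
  refine ⟨?_, ?_, ?_⟩
  · intro a ha
    rcases List.mem_cons.mp ha with h | h
    · exact hl.1 a (h ▸ List.mem_cons_self (a := e) (l := t))
    · exact hl.1 a (List.mem_cons_of_mem e (List.drop_subset _ _ h))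
  · apply List.isChain_cons.mpr
    refine ⟨?_, hchT.drop _⟩
    intro y hy
    rw [head?_drop'] at hy
    exact chain_get hchT hk hy
  · intro a ha f hf
    have ha' : a = e := (by simpa using ha : e = a).symm
    have hf1 : f ∈ ((e :: t).getLast?) := by
      have h1 : (e :: t.drop (k+1)).getLast? = (t.drop (k+1)).getLast? := by
        rw [show e :: t.drop (k+1) = [e] ++ t.drop (k+1) by simp,
          List.getLast?_append_of_ne_nil _ hdne]
      have h2 : (e :: t).getLast? = t.getLast? := by
        rw [show e :: t = [e] ++ t by simp, List.getLast?_append_of_ne_nil _ htne]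
      rw [h1, getLast?_drop' hdne] at hf
      rw [h2]; exact hf
    rw [ha']
    exact hl.2.2 e rfl f hf1

lemma isLoop_splus_right {e : Edge d} {t : List (Edge d)} {k : ℕ}
    (hl : IsLoop (e :: t)) (hk : t.get? k = some e) :
    IsLoop (t.take (k+1)) ∧ t.take (k+1) ≠ [] := by
  have hklen : k < t.length := (List.get?_eq_some.mp hk).1
  have hchT : List.Chain' (fun a b => a.2 = b.1) t := hl.2.1.tail
  have hne : t.take (k+1) ≠ [] := by
    apply List.ne_nil_of_length_pos
    rw [List.length_take]; omega
  refine ⟨⟨?_, hchT.take _, ?_⟩, hne⟩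
  · intro a ha
    exact hl.1 a (List.mem_cons_of_mem e (List.take_subset _ _ ha))
  · intro a ha f hf
    rw [getLast?_take' hk] at hf
    have hf' : f = e := (by simpa using hf : e = f).symm
    rw [head?_take' (Nat.succ_ne_zero k)] at ha
    have ha' : t.get? 0 = some a := by rw [List.get?_zero]; exact ha
    rw [hf']
    exact chain_get hl.2.1 (show (e::t).get? 0 = some e from rfl)
      (show (e::t).get? 1 = some a from ha')

lemma isLoop_sminus_left {e : Edge d} {t : List (Edge d)} {k : ℕ}
    (hl : IsLoop (e :: t)) (hk : t.get? k = some (erev e)) (hk1 : 1 ≤ k) :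
    IsLoop (t.take k) ∧ t.take k ≠ [] := by
  have hklen : k < t.length := (List.get?_eq_some.mp hk).1
  have hchT : List.Chain' (fun a b => a.2 = b.1) t := hl.2.1.tail
  have hne : t.take k ≠ [] := by
    apply List.ne_nil_of_length_pos
    rw [List.length_take]; omega
  refine ⟨⟨?_, hchT.take _, ?_⟩, hne⟩
  · intro a ha
    exact hl.1 a (List.mem_cons_of_mem e (List.take_subset _ _ ha))
  · intro a ha f hf
    obtain ⟨x, hx⟩ := get?_some_of_lt t (show k - 1 < t.length by omega)
    have hkk : k - 1 + 1 = k := by omega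
    have hlastx : (t.take k).getLast? = some x := by
      conv_lhs => rw [← hkk]
      exact getLast?_take' hx
    rw [hlastx] at hf
    have hf' : f = x := (by simpa using hf : x = f).symm
    rw [head?_take' (by omega)] at ha
    have ha' : t.get? 0 = some a := by rw [List.get?_zero]; exact ha
    -- x.2 = (erev e).1 = e.2 = a.1
    have c1 : x.2 = (erev e).1 := by
      apply chain_get hchT hx
      rw [hkk]; exact hk
    have c2 : e.2 = a.1 :=
      chain_get hl.2.1 (show (e::t).get? 0 = some e from rfl)
        (show (e::t).get? 1 = some a from ha')
    rw [hf']
    show x.2 = a.1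
    rw [c1, ← c2]; rfl

lemma isLoop_sminus_right {e : Edge d} {t : List (Edge d)} {k : ℕ}
    (hl : IsLoop (e :: t)) (hk : t.get? k = some (erev e)) (hlt : k + 1 < t.length) :
    IsLoop (t.drop (k+1)) ∧ t.drop (k+1) ≠ [] := by
  have hchT : List.Chain' (fun a b => a.2 = b.1) t := hl.2.1.tail
  have htne : t ≠ [] := by apply List.ne_nil_of_length_pos; omega
  have hdne : t.drop (k+1) ≠ [] := by
    apply List.ne_nil_of_length_pos
    rw [List.length_drop]; omega
  refine ⟨⟨?_, hchT.drop _, ?_⟩, hdne⟩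
  · intro a ha
    exact hl.1 a (List.mem_cons_of_mem e (List.drop_subset _ _ ha))
  · intro a ha f hf
    rw [head?_drop'] at ha
    have c1 : (erev e).2 = a.1 := chain_get hchT hk ha
    rw [getLast?_drop' hdne] at hf
    have hf1 : f ∈ ((e :: t).getLast?) := by
      rw [show e :: t = [e] ++ t by simp, List.getLast?_append_of_ne_nil _ htne]
      exact hf
    have c2 : f.2 = e.1 := hl.2.2 e rfl f hf1
    rw [c2, ← c1]; rfl

/-- Complementary path of an occurrence in a loop: chain and endpoint facts. -/
lemma complement_facts {Lst : List (Edge d)} (hl : IsLoop Lst) {m : ℕ} {x : Edge d}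
    (hm : Lst.get? m = some x) :
    List.Chain' (fun a b => a.2 = b.1) (Lst.drop (m+1) ++ Lst.take m)
    ∧ (∀ y ∈ (Lst.drop (m+1) ++ Lst.take m).head?, x.2 = y.1)
    ∧ (∀ z ∈ (Lst.drop (m+1) ++ Lst.take m).getLast?, z.2 = x.1) := by
  have hmlt : m < Lst.length := (List.get?_eq_some.mp hm).1
  have hLne : Lst ≠ [] := by apply List.ne_nil_of_length_pos; omega
  obtain ⟨h0, hh0⟩ : ∃ h0, Lst.head? = some h0 := by
    cases Lst with
    | nil => exact absurd rfl hLne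
    | cons a t => exact ⟨a, rfl⟩
  have hget0 : Lst.get? 0 = some h0 := by rw [List.get?_zero]; exact hh0
  have hwv : ∀ z ∈ Lst.getLast?, z.2 = h0.1 := fun z hz => hl.2.2 h0 hh0 z hz
  have hch := hl.2.1
  refine ⟨?_, ?_, ?_⟩
  · apply List.isChain_append.mpr
    refine ⟨hch.drop _, hch.take _, ?_⟩
    intro a ha y hy
    have hdne : Lst.drop (m+1) ≠ [] := by intro h; rw [h] at ha; simp at ha
    have hm0 : m ≠ 0 := by intro h; subst h; simp at hy
    rw [getLast?_drop' hdne] at ha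
    rw [head?_take' hm0, hh0] at hy
    have hy' : y = h0 := (by simpa using hy : h0 = y).symm
    rw [hy']
    exact hwv a ha
  · intro y hy
    by_cases hdne : Lst.drop (m+1) = []
    · rw [hdne, List.nil_append] at hy
      have hm0 : m ≠ 0 := by intro h; subst h; simp at hy
      rw [head?_take' hm0, hh0] at hy
      have hy' : y = h0 := (by simpa using hy : h0 = y).symm
      -- x is the last element of Lst
      have hdlen : Lst.length ≤ m + 1 := by
        have h' := congrArg List.length hdne
        rw [List.length_drop] at h'
        simp only [List.length_nil] at h'
        omega
      have hxlast : x ∈ Lst.getLast? := by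
        rw [List.getLast?_eq_getElem?, ← List.get?_eq_getElem?,
          show Lst.length - 1 = m by omega]
        exact hm
      rw [hy']
      exact hwv x hxlast
    · rw [List.head?_append_of_ne_nil _ hdne, head?_drop'] at hy
      exact chain_get hch hm hy
  · intro z hz
    by_cases htne : Lst.take m = []
    · rw [htne, List.append_nil] at hz
      have hm0 : m = 0 := by
        have h' := congrArg List.length htne
        rw [List.length_take] at h'
        simp only [List.length_nil] at h'
        omega
      subst hm0
      have hdne : Lst.drop 1 ≠ [] := by intro h; rw [h] at hz; simp at hz
      rw [getLast?_drop' hdne] at hz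
      have hx0 : x = h0 := by
        rw [hget0] at hm; simpa using hm.symm
      rw [hx0]
      exact hwv z hz
    · have hm0 : m ≠ 0 := by intro h; subst h; simp at htne
      rw [List.getLast?_append_of_ne_nil _ htne] at hz
      obtain ⟨x', hx'⟩ := get?_some_of_lt Lst (show m - 1 < Lst.length by omega)
      have hkk : m - 1 + 1 = m := by omega
      have hlastx : (Lst.take m).getLast? = some x' := by
        conv_lhs => rw [← hkk]
        exact getLast?_take' hx'
      rw [hlastx] at hz
      have hz' : z = x' := (by simpa using hz : x' = z).symm
      rw [hz']
      apply chain_get hch hx'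
      rw [hkk]; exact hm

lemma plaq_isLoop (q : Plaq d) : IsLoop q.edges := by
  obtain ⟨c, i, j, hij⟩ := q
  refine ⟨?_, ?_, ?_⟩
  · intro a ha
    simp only [Plaq.edges, List.mem_cons, List.mem_singleton, List.not_mem_nil,
      or_false] at ha
    rcases ha with h | h | h | h
    · exact ⟨i, Or.inl (by rw [h])⟩
    · exact ⟨j, Or.inl (by rw [h])⟩
    · exact ⟨i, Or.inr (by rw [h]; exact add_right_comm c (Pi.single i 1) (Pi.single j 1))⟩
    · exact ⟨j, Or.inr (by rw [h])⟩
  · simp [Plaq.edges, List.Chain', List.isChain_cons_cons]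
  · intro a ha f hf
    simp only [Plaq.edges] at ha hf
    simp at ha hf
    rw [← ha, ← hf]

lemma plaq_edges_length (q : Plaq d) : q.edges.length = 4 := by
  simp [Plaq.edges]

lemma isLoop_dplus {e : Edge d} {t : List (Edge d)} {q : Plaq d} {m : ℕ}
    (hl : IsLoop (e :: t)) (hm : q.edges.get? m = some e) :
    IsLoop (e :: (q.edges.drop (m+1) ++ q.edges.take m ++ e :: t)) := by
  obtain ⟨hcM, hheadM, hlastM⟩ := complement_facts (plaq_isLoop q) hm
  have hmlt : m < 4 := by
    have := (List.get?_eq_some.mp hm).1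
    rwa [plaq_edges_length] at this
  have hMlen : (q.edges.drop (m+1) ++ q.edges.take m).length = 3 := by
    rw [List.length_append, List.length_drop, List.length_take, plaq_edges_length]
    omega
  have hMne : q.edges.drop (m+1) ++ q.edges.take m ≠ [] := by
    apply List.ne_nil_of_length_pos; omega
  have htne : t ≠ [] := loop_tail_ne hl
  refine ⟨?_, ?_, ?_⟩
  · intro a ha
    rcases List.mem_cons.mp ha with h | h
    · exact hl.1 a (h ▸ List.mem_cons_self (a := e) (l := t))
    rcases List.mem_append.mp h with h | h
    · rcases List.mem_append.mp h with h | h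
      · exact (plaq_isLoop q).1 a (List.drop_subset _ _ h)
      · exact (plaq_isLoop q).1 a (List.take_subset _ _ h)
    · exact hl.1 a h
  · apply List.isChain_cons.mpr
    constructor
    · intro y hy
      rw [List.head?_append_of_ne_nil _ hMne] at hy
      exact hheadM y hy
    · apply List.isChain_append.mpr
      refine ⟨hcM, hl.2.1, ?_⟩
      intro a ha y hy
      have hy' : y = e := (by simpa using hy : e = y).symm
      rw [hy']
      exact hlastM a ha
  · intro a ha f hf
    have ha' : a = e := (by simpa using ha : e = a).symm
    have hlast : (e :: (q.edges.drop (m+1) ++ q.edges.take m ++ e :: t)).getLast?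
        = (e :: t).getLast? := by
      rw [show e :: (q.edges.drop (m+1) ++ q.edges.take m ++ e :: t)
          = (e :: (q.edges.drop (m+1) ++ q.edges.take m)) ++ (e :: t) by simp,
        List.getLast?_append_of_ne_nil _ (by simp)]
    rw [hlast] at hf
    rw [ha']
    exact hl.2.2 e rfl f hf

lemma isLoop_dminus {e : Edge d} {t : List (Edge d)} {p : Plaq d} {m : ℕ}
    (hl : IsLoop (e :: t)) (hm : p.edges.get? m = some (erev e)) :
    IsLoop (p.edges.drop (m+1) ++ p.edges.take m ++ t)
    ∧ p.edges.drop (m+1) ++ p.edges.take m ++ t ≠ [] := by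
  obtain ⟨hcM, hheadM, hlastM⟩ := complement_facts (plaq_isLoop p) hm
  have hmlt : m < 4 := by
    have := (List.get?_eq_some.mp hm).1
    rwa [plaq_edges_length] at this
  have hMlen : (p.edges.drop (m+1) ++ p.edges.take m).length = 3 := by
    rw [List.length_append, List.length_drop, List.length_take, plaq_edges_length]
    omega
  have hMne : p.edges.drop (m+1) ++ p.edges.take m ≠ [] := by
    apply List.ne_nil_of_length_pos; omega
  have htne : t ≠ [] := loop_tail_ne hl
  have hne : p.edges.drop (m+1) ++ p.edges.take m ++ t ≠ [] := by
    simp only [ne_eq, List.append_eq_nil_iff]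
    intro ⟨h1, h2⟩
    exact htne h2
  refine ⟨⟨?_, ?_, ?_⟩, hne⟩
  · intro a ha
    rcases List.mem_append.mp ha with h | h
    · rcases List.mem_append.mp h with h | h
      · exact (plaq_isLoop p).1 a (List.drop_subset _ _ h)
      · exact (plaq_isLoop p).1 a (List.take_subset _ _ h)
    · exact hl.1 a (List.mem_cons_of_mem e h)
  · apply List.isChain_append.mpr
    refine ⟨hcM, hl.2.1.tail, ?_⟩
    intro a ha y hy
    have c1 : a.2 = (erev e).1 := hlastM a ha
    have hy' : t.get? 0 = some y := by rw [List.get?_zero]; exact hy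
    have c2 : e.2 = y.1 :=
      chain_get hl.2.1 (show (e::t).get? 0 = some e from rfl)
        (show (e::t).get? 1 = some y from hy')
    rw [c1, ← c2]; rfl
  · intro a ha f hf
    rw [List.head?_append_of_ne_nil _ hMne] at ha
    have c1 : (erev e).2 = a.1 := hheadM a ha
    rw [List.getLast?_append_of_ne_nil _ htne] at hf
    have hf1 : f ∈ ((e :: t).getLast?) := by
      rw [show e :: t = [e] ++ t by simp, List.getLast?_append_of_ne_nil _ htne]
      exact hf
    have c2 : f.2 = e.1 := hl.2.2 e rfl f hf1
    rw [c2, ← c1]; rfl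

end OpLoops

section Param
variable {d : ℕ}

/-- Index set of positive splittings at the head of `e :: t`. -/
def KplusF (e : Edge d) (t : List (Edge d)) : Finset ℕ :=
  (Finset.range t.length).filter (fun k => t.get? k = some e)

def GplusF (s : Multiset (List (Edge d))) (e : Edge d) (t : List (Edge d)) (k : ℕ) :
    Multiset (List (Edge d)) :=
  (e :: t.drop (k+1)) ::ₘ (t.take (k+1)) ::ₘ s.erase (e :: t)

def KminusF (e : Edge d) (t : List (Edge d)) : Finset ℕ :=
  (Finset.range t.length).filter (fun k => t.get? k = some (erev e))

def GminusF (s : Multiset (List (Edge d))) (e : Edge d) (t : List (Edge d)) (k : ℕ) :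
    Multiset (List (Edge d)) :=
  (↑([t.drop (k + 1), t.take k].filter fun x => !x.isEmpty) :
      Multiset (List (Edge d))) + s.erase (e :: t)

lemma splusSet_eq (s : Multiset (List (Edge d))) (e : Edge d) (t : List (Edge d)) :
    SplusSet s (e :: t) 0 = ↑((KplusF e t).image (GplusF s e t)) := by
  ext x
  constructor
  · rintro ⟨e', t', k, hrot, hk, hx⟩
    rw [List.rotate_zero] at hrot
    obtain ⟨he, ht⟩ : e' = e ∧ t' = t := by
      constructor <;> [exact (List.cons.injEq _ _ _ _ ▸ hrot).1.symm;
        exact (List.cons.injEq _ _ _ _ ▸ hrot).2.symm]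
    subst he; subst ht
    simp only [Finset.coe_image, Set.mem_image, Finset.mem_coe]
    refine ⟨k, ?_, hx.symm⟩
    rw [KplusF, Finset.mem_filter, Finset.mem_range]
    exact ⟨(List.get?_eq_some.mp hk).1, hk⟩
  · intro hx
    simp only [Finset.coe_image, Set.mem_image, Finset.mem_coe] at hx
    obtain ⟨k, hkmem, hxe⟩ := hx
    rw [KplusF, Finset.mem_filter] at hkmem
    exact ⟨e, t, k, by rw [List.rotate_zero], hkmem.2, hxe.symm⟩

lemma sminusSet_eq (s : Multiset (List (Edge d))) (e : Edge d) (t : List (Edge d)) :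
    SminusSet s (e :: t) 0 = ↑((KminusF e t).image (GminusF s e t)) := by
  ext x
  constructor
  · rintro ⟨e', t', k, hrot, hk, hx⟩
    rw [List.rotate_zero] at hrot
    obtain ⟨he, ht⟩ : e' = e ∧ t' = t := by
      constructor <;> [exact (List.cons.injEq _ _ _ _ ▸ hrot).1.symm;
        exact (List.cons.injEq _ _ _ _ ▸ hrot).2.symm]
    subst he; subst ht
    simp only [Finset.coe_image, Set.mem_image, Finset.mem_coe]
    refine ⟨k, ?_, hx.symm⟩
    rw [KminusF, Finset.mem_filter, Finset.mem_range]
    exact ⟨(List.get?_eq_some.mp hk).1, hk⟩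
  · intro hx
    simp only [Finset.coe_image, Set.mem_image, Finset.mem_coe] at hx
    obtain ⟨k, hkmem, hxe⟩ := hx
    rw [KminusF, Finset.mem_filter] at hkmem
    exact ⟨e, t, k, by rw [List.rotate_zero], hkmem.2, hxe.symm⟩

/-- Edges of a plaquette given by corner and directions (no distinctness proof). -/
def plaqEdges (c : Vtx d) (i j : Fin d) : List (Edge d) :=
  [(c, c + Pi.single i 1),
   (c + Pi.single i 1, c + Pi.single i 1 + Pi.single j 1),
   (c + Pi.single i 1 + Pi.single j 1, c + Pi.single j 1),
   (c + Pi.single j 1, c)]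

lemma Plaq.edges_eq (P : Plaq d) : P.edges = plaqEdges P.corner P.dir1 P.dir2 := rfl

/-- Recovered corner of a plaquette containing edge `e` at position `m`. -/
def cornerOf (e : Edge d) (m : ℕ) (i j : Fin d) : Vtx d :=
  if m = 0 then e.1
  else if m = 1 then e.1 - Pi.single i 1
  else if m = 2 then e.2 - Pi.single j 1
  else e.2

lemma corner_recover {q : Plaq d} {m : ℕ} {x : Edge d} (hm : q.edges.get? m = some x) :
    q.corner = cornerOf x m q.dir1 q.dir2 := by
  have hmlt : m < 4 := by
    have := (List.get?_eq_some.mp hm).1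
    rwa [plaq_edges_length] at this
  interval_cases m <;>
    simp only [Plaq.edges, List.get?, List.getElem?_cons_zero, List.getElem?_cons_succ, Option.some.injEq] at hm <;>
    rw [cornerOf] <;> norm_num <;> rw [← hm]
  · exact (add_sub_cancel_right _ _).symm
  · exact (add_sub_cancel_right _ _).symm

def TplusF (e : Edge d) : Finset (ℕ × Fin d × Fin d) :=
  ((Finset.range 4) ×ˢ ((Finset.univ : Finset (Fin d)) ×ˢ (Finset.univ : Finset (Fin d)))).filter
    (fun z => z.2.1 ≠ z.2.2 ∧
      (plaqEdges (cornerOf e z.1 z.2.1 z.2.2) z.2.1 z.2.2).get? z.1 = some e)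

def HplusF (s : Multiset (List (Edge d))) (e : Edge d) (t : List (Edge d))
    (z : ℕ × Fin d × Fin d) : Multiset (List (Edge d)) :=
  (e :: ((plaqEdges (cornerOf e z.1 z.2.1 z.2.2) z.2.1 z.2.2).drop (z.1+1)
      ++ (plaqEdges (cornerOf e z.1 z.2.1 z.2.2) z.2.1 z.2.2).take z.1 ++ e :: t)) ::ₘ
    s.erase (e :: t)

def TminusF (e : Edge d) : Finset (ℕ × Fin d × Fin d) :=
  ((Finset.range 4) ×ˢ ((Finset.univ : Finset (Fin d)) ×ˢ (Finset.univ : Finset (Fin d)))).filter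
    (fun z => z.2.1 ≠ z.2.2 ∧
      (plaqEdges (cornerOf (erev e) z.1 z.2.1 z.2.2) z.2.1 z.2.2).get? z.1 = some (erev e))

def HminusF (s : Multiset (List (Edge d))) (e : Edge d) (t : List (Edge d))
    (z : ℕ × Fin d × Fin d) : Multiset (List (Edge d)) :=
  ((plaqEdges (cornerOf (erev e) z.1 z.2.1 z.2.2) z.2.1 z.2.2).drop (z.1+1)
      ++ (plaqEdges (cornerOf (erev e) z.1 z.2.1 z.2.2) z.2.1 z.2.2).take z.1 ++ t) ::ₘ
    s.erase (e :: t)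

lemma dplusSet_eq (s : Multiset (List (Edge d))) (e : Edge d) (t : List (Edge d)) :
    DplusSet s (e :: t) 0 = ↑((TplusF e).image (HplusF s e t)) := by
  ext x
  constructor
  · rintro ⟨e', t', q, m, hrot, hm, hx⟩
    rw [List.rotate_zero] at hrot
    obtain ⟨he, ht⟩ : e' = e ∧ t' = t := by
      constructor <;> [exact (List.cons.injEq _ _ _ _ ▸ hrot).1.symm;
        exact (List.cons.injEq _ _ _ _ ▸ hrot).2.symm]
    subst he; subst ht
    have hmlt : m < 4 := by
      have := (List.get?_eq_some.mp hm).1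
      rwa [plaq_edges_length] at this
    have hc := corner_recover hm
    simp only [Finset.coe_image, Set.mem_image, Finset.mem_coe]
    refine ⟨(m, q.dir1, q.dir2), ?_, ?_⟩
    · rw [TplusF, Finset.mem_filter]
      refine ⟨by simp [Finset.mem_product, hmlt], q.hdir, ?_⟩
      rw [← hc, ← Plaq.edges_eq]
      exact hm
    · rw [HplusF]
      simp only
      rw [← hc, ← Plaq.edges_eq]
      exact hx.symm
  · intro hx
    simp only [Finset.coe_image, Set.mem_image, Finset.mem_coe] at hx
    obtain ⟨z, hzmem, hxe⟩ := hx
    rw [TplusF, Finset.mem_filter] at hzmem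
    obtain ⟨-, hne, hget⟩ := hzmem
    refine ⟨e, t, ⟨cornerOf e z.1 z.2.1 z.2.2, z.2.1, z.2.2, hne⟩, z.1,
      by rw [List.rotate_zero], hget, hxe.symm⟩

lemma dminusSet_eq (s : Multiset (List (Edge d))) (e : Edge d) (t : List (Edge d)) :
    DminusSet s (e :: t) 0 = ↑((TminusF e).image (HminusF s e t)) := by
  ext x
  constructor
  · rintro ⟨e', t', q, m, hrot, hm, hx⟩
    rw [List.rotate_zero] at hrot
    obtain ⟨he, ht⟩ : e' = e ∧ t' = t := by
      constructor <;> [exact (List.cons.injEq _ _ _ _ ▸ hrot).1.symm;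
        exact (List.cons.injEq _ _ _ _ ▸ hrot).2.symm]
    subst he; subst ht
    have hmlt : m < 4 := by
      have := (List.get?_eq_some.mp hm).1
      rwa [plaq_edges_length] at this
    have hc := corner_recover hm
    simp only [Finset.coe_image, Set.mem_image, Finset.mem_coe]
    refine ⟨(m, q.dir1, q.dir2), ?_, ?_⟩
    · rw [TminusF, Finset.mem_filter]
      refine ⟨by simp [Finset.mem_product, hmlt], q.hdir, ?_⟩
      rw [← hc, ← Plaq.edges_eq]
      exact hm
    · rw [HminusF]
      simp only
      rw [← hc, ← Plaq.edges_eq]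
      exact hx.symm
  · intro hx
    simp only [Finset.coe_image, Set.mem_image, Finset.mem_coe] at hx
    obtain ⟨z, hzmem, hxe⟩ := hx
    rw [TminusF, Finset.mem_filter] at hzmem
    obtain ⟨-, hne, hget⟩ := hzmem
    refine ⟨e, t, ⟨cornerOf (erev e) z.1 z.2.1 z.2.2, z.2.1, z.2.2, hne⟩, z.1,
      by rw [List.rotate_zero], hget, hxe.symm⟩

lemma TplusF_card (e : Edge d) : (TplusF e).card ≤ 4 * (d * d) := by
  calc (TplusF e).card ≤ ((Finset.range 4) ×ˢ ((Finset.univ : Finset (Fin d)) ×ˢ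
      (Finset.univ : Finset (Fin d)))).card := Finset.card_filter_le _ _
    _ = 4 * (d * d) := by simp [Finset.card_product]

lemma TminusF_card (e : Edge d) : (TminusF e).card ≤ 4 * (d * d) := by
  calc (TminusF e).card ≤ ((Finset.range 4) ×ˢ ((Finset.univ : Finset (Fin d)) ×ˢ
      (Finset.univ : Finset (Fin d)))).card := Finset.card_filter_le _ _
    _ = 4 * (d * d) := by simp [Finset.card_product]

end Param

section CoreSums
variable {d : ℕ} {L Λ : ℝ}

lemma sum_idx_bound {K : Finset ℕ} {f : ℕ → ℕ}
    (hf3 : ∀ k ∈ K, 3 ≤ f k) (hfM : ∀ k ∈ K, f k ≤ M)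
    (hinj : ∀ k ∈ K, ∀ k' ∈ K, f k = f k' → k = k') :
    ∑ k ∈ K, (1:ℝ)/((f k : ℕ):ℝ)^2 ≤ 1/2 := by
  have he : ∑ j ∈ K.image f, (1:ℝ)/(j:ℝ)^2
      = ∑ k ∈ K, (1:ℝ)/((f k : ℕ):ℝ)^2 :=
    Finset.sum_image (f := fun j : ℕ => (1:ℝ)/(j:ℝ)^2) hinj
  rw [← he]
  clear he
  refine le_trans (Finset.sum_le_sum_of_subset_of_nonneg ?_ ?_) (sum_inv_sq_le M)
  · intro j hj
    obtain ⟨k, hk, hjk⟩ := Finset.mem_image.mp hj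
    rw [Finset.mem_Icc]
    exact ⟨hjk ▸ hf3 k hk, hjk ▸ hfM k hk⟩
  · intro j _ _
    positivity

variable (hL : 1 ≤ L) (hΛ : L * 59049 ≤ Λ)
variable {B : ℝ} (hB0 : 0 ≤ B) {φ ψ : Multiset (List (Edge d)) → ℝ}
variable (hDB : ∀ s', IsStringM s' → |φ s' - ψ s'| ≤ B * wfun Λ s')
variable {s : Multiset (List (Edge d))} {e : Edge d} {t : List (Edge d)}
variable (hs : IsStringM s) (hst : (e :: t) ∈ s)

include hst in
lemma wfun_s_eq' : wfun Λ s = vfun Λ (t.length + 1) * wfun Λ (s.erase (e :: t)) := by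
  conv_lhs => rw [← Multiset.cons_erase hst]
  rw [wfun_cons, List.length_cons]

include hL hΛ hB0 hDB hs hst in
lemma splus_sum_bound (hred : Red (e :: t)) :
    ∑ k ∈ KplusF e t, |φ (GplusF s e t k) - ψ (GplusF s e t k)|
      ≤ (1/4) * B * wfun Λ s := by
  have hred' := hred
  clear hred
  have hloop : IsLoop (e :: t) := (hs _ hst).2
  have hw0 : 0 < wfun Λ (s.erase (e :: t)) := wfun_pos (lam_pos hL hΛ) _
  have hvm : 0 < vfun Λ (t.length + 1) := vfun_pos (lam_pos hL hΛ) _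
  set w₀ := wfun Λ (s.erase (e :: t)) with hw₀
  -- termwise bound
  have hterm : ∀ k ∈ KplusF e t,
      |φ (GplusF s e t k) - ψ (GplusF s e t k)|
      ≤ B * ((1/4) * (1/((t.length - k : ℕ):ℝ)^2 + 1/((k+1 : ℕ):ℝ)^2)
          * vfun Λ (t.length + 1)) * w₀ := by
    intro k hk
    rw [KplusF, Finset.mem_filter, Finset.mem_range] at hk
    obtain ⟨hklt, hkget⟩ := hk
    obtain ⟨hk2, hk3⟩ := splus_bounds hloop hred' hkget
    have hstr : IsStringM (GplusF s e t k) := by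
      intro g hg
      rw [GplusF] at hg
      rcases Multiset.mem_cons.mp hg with h | h
      · subst h
        exact ⟨List.cons_ne_nil _ _, isLoop_splus_left hloop hkget (by omega)⟩
      rcases Multiset.mem_cons.mp h with h | h
      · subst h
        have := isLoop_splus_right hloop hkget
        exact ⟨this.2, this.1⟩
      · exact hs.erase _ g h
    have hlen1 : (e :: t.drop (k+1)).length = t.length - k := by
      simp [List.length_drop]; omega
    have hlen2 : (t.take (k+1)).length = k + 1 := by
      simp [List.length_take]; omega
    have hwg : wfun Λ (GplusF s e t k)
        = vfun Λ (t.length - k) * (vfun Λ (k+1) * w₀) := by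
      rw [GplusF, wfun_cons, wfun_cons, hlen1, hlen2]
    have hsp := vfun_split_pos hL hΛ (a := t.length - k) (b := k + 1)
      (m := t.length + 1) (by omega) (by omega) (by omega)
    calc |φ (GplusF s e t k) - ψ (GplusF s e t k)|
        ≤ B * wfun Λ (GplusF s e t k) := hDB _ hstr
      _ = B * (vfun Λ (t.length - k) * vfun Λ (k+1)) * w₀ := by rw [hwg]; ring
      _ ≤ B * ((1/4) * (1/((t.length - k : ℕ):ℝ)^2 + 1/((k+1 : ℕ):ℝ)^2)
            * vfun Λ (t.length + 1)) * w₀ := by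
          apply mul_le_mul_of_nonneg_right _ (le_of_lt hw0)
          exact mul_le_mul_of_nonneg_left hsp hB0
  refine le_trans (Finset.sum_le_sum hterm) ?_
  have hsum1 : ∑ k ∈ KplusF e t, (1:ℝ)/((t.length - k : ℕ):ℝ)^2 ≤ 1/2 := by
    apply sum_idx_bound (M := t.length)
    · intro k hk
      rw [KplusF, Finset.mem_filter] at hk
      have := splus_bounds hloop hred' hk.2
      omega
    · intro k _; omega
    · intro k hk k' hk' hkk
      rw [KplusF, Finset.mem_filter, Finset.mem_range] at hk hk'
      omega
  have hsum2 : ∑ k ∈ KplusF e t, (1:ℝ)/((k + 1 : ℕ):ℝ)^2 ≤ 1/2 := by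
    apply sum_idx_bound (M := t.length + 1)
    · intro k hk
      rw [KplusF, Finset.mem_filter] at hk
      have := splus_bounds hloop hred' hk.2
      omega
    · intro k hk
      rw [KplusF, Finset.mem_filter, Finset.mem_range] at hk
      omega
    · intro k _ k' _ hkk; omega
  have hS : ∑ k ∈ KplusF e t,
      (1/((t.length - k : ℕ):ℝ)^2 + 1/((k+1 : ℕ):ℝ)^2) ≤ 1 := by
    rw [Finset.sum_add_distrib]
    linarith
  have hSnn : (0:ℝ) ≤ ∑ k ∈ KplusF e t,
      (1/((t.length - k : ℕ):ℝ)^2 + 1/((k+1 : ℕ):ℝ)^2) := by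
    apply Finset.sum_nonneg
    intro k _
    positivity
  rw [wfun_s_eq' hst]
  calc ∑ k ∈ KplusF e t, B * ((1/4) * (1/((t.length - k : ℕ):ℝ)^2
          + 1/((k+1 : ℕ):ℝ)^2) * vfun Λ (t.length + 1)) * w₀
      = (B * (1/4) * vfun Λ (t.length + 1) * w₀) * ∑ k ∈ KplusF e t,
          (1/((t.length - k : ℕ):ℝ)^2 + 1/((k+1 : ℕ):ℝ)^2) := by
        rw [Finset.mul_sum]
        apply Finset.sum_congr rfl
        intro k _; ring
    _ ≤ (B * (1/4) * vfun Λ (t.length + 1) * w₀) * 1 := by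
        apply mul_le_mul_of_nonneg_left hS
        positivity
    _ = (1/4) * B * (vfun Λ (t.length + 1) * w₀) := by ring
end CoreSums

section CoreSums2
variable {d : ℕ} {L Λ : ℝ}
variable (hL : 1 ≤ L) (hΛ : L * 59049 ≤ Λ)
variable {B : ℝ} (hB0 : 0 ≤ B) {φ ψ : Multiset (List (Edge d)) → ℝ}
variable (hDB : ∀ s', IsStringM s' → |φ s' - ψ s'| ≤ B * wfun Λ s')
variable {s : Multiset (List (Edge d))} {e : Edge d} {t : List (Edge d)}
variable (hs : IsStringM s) (hst : (e :: t) ∈ s)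

include hL hΛ hB0 hDB hs hst in
lemma sminus_sum_bound (hred : Red (e :: t)) :
    ∑ k ∈ KminusF e t, |φ (GminusF s e t k) - ψ (GminusF s e t k)|
      ≤ (1/8) * B * wfun Λ s := by
  have hloop : IsLoop (e :: t) := (hs _ hst).2
  have hΛpos := lam_pos hL hΛ
  have hΛge := lam_ge hL hΛ
  have hw0 : 0 < wfun Λ (s.erase (e :: t)) := wfun_pos hΛpos _
  have hvm : 0 < vfun Λ (t.length + 1) := vfun_pos hΛpos _
  set w₀ := wfun Λ (s.erase (e :: t)) with hw₀
  set K1 : Finset ℕ := (KminusF e t).filter (fun k => k + 1 = t.length) with hK1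
  set K2 : Finset ℕ := (KminusF e t).filter (fun k => ¬ (k + 1 = t.length)) with hK2
  have hsplit := Finset.sum_filter_add_sum_filter_not (KminusF e t)
    (fun k => k + 1 = t.length)
    (fun k => |φ (GminusF s e t k) - ψ (GminusF s e t k)|)
  -- bound on K1 terms
  have hbound1 : ∀ k ∈ K1, |φ (GminusF s e t k) - ψ (GminusF s e t k)|
      ≤ B * ((1024/Λ^2) * vfun Λ (t.length + 1)) * w₀ := by
    intro k hk
    rw [hK1, Finset.mem_filter] at hk
    obtain ⟨hkm, hkend⟩ := hk
    rw [KminusF, Finset.mem_filter, Finset.mem_range] at hkm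
    obtain ⟨hklt, hkget⟩ := hkm
    obtain ⟨hk3, -⟩ := sminus_bounds hloop hred hkget
    have hdrop : t.drop (k+1) = [] := by
      rw [hkend]; exact List.drop_length (l := t)
    have htake_ne : ¬ (t.take k).isEmpty = true := by
      rw [List.isEmpty_iff]
      apply List.ne_nil_of_length_pos
      rw [List.length_take]; omega
    have hGeq : GminusF s e t k = (t.take k) ::ₘ s.erase (e :: t) := by
      rw [GminusF, hdrop]
      simp only [List.filter, List.isEmpty_nil, Bool.not_true, htake_ne]
      simp [htake_ne]
    have hstr : IsStringM (GminusF s e t k) := by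
      rw [hGeq]
      intro g hg
      rcases Multiset.mem_cons.mp hg with h | h
      · subst h
        have := isLoop_sminus_left hloop hkget (by omega)
        exact ⟨this.2, this.1⟩
      · exact hs.erase _ g h
    have hwg : wfun Λ (GminusF s e t k) = vfun Λ k * w₀ := by
      rw [hGeq, wfun_cons, List.length_take]
      congr 2
      omega
    have hv := vfun_single_neg hL hΛ (a := k) (m := t.length + 1) (by omega) (by omega)
    calc |φ (GminusF s e t k) - ψ (GminusF s e t k)|
        ≤ B * wfun Λ (GminusF s e t k) := hDB _ hstr
      _ = B * vfun Λ k * w₀ := by rw [hwg]; ring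
      _ ≤ B * ((1024/Λ^2) * vfun Λ (t.length + 1)) * w₀ := by
          apply mul_le_mul_of_nonneg_right _ (le_of_lt hw0)
          exact mul_le_mul_of_nonneg_left hv hB0
  have hcard1 : K1.card ≤ 1 := by
    have hsub : K1 ⊆ {t.length - 1} := by
      intro k hk
      rw [hK1, Finset.mem_filter] at hk
      rw [Finset.mem_singleton]
      omega
    calc K1.card ≤ ({t.length - 1} : Finset ℕ).card := Finset.card_le_card hsub
      _ = 1 := Finset.card_singleton _
  have hsum1 : ∑ k ∈ K1, |φ (GminusF s e t k) - ψ (GminusF s e t k)|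
      ≤ B * ((1024/Λ^2) * vfun Λ (t.length + 1)) * w₀ := by
    have hnn : 0 ≤ B * ((1024/Λ^2) * vfun Λ (t.length + 1)) * w₀ := by positivity
    calc ∑ k ∈ K1, |φ (GminusF s e t k) - ψ (GminusF s e t k)|
        ≤ K1.card • (B * ((1024/Λ^2) * vfun Λ (t.length + 1)) * w₀) :=
          Finset.sum_le_card_nsmul _ _ _ hbound1
      _ = K1.card * (B * ((1024/Λ^2) * vfun Λ (t.length + 1)) * w₀) := by
          rw [nsmul_eq_mul]
      _ ≤ 1 * (B * ((1024/Λ^2) * vfun Λ (t.length + 1)) * w₀) := by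
          apply mul_le_mul_of_nonneg_right _ hnn
          exact_mod_cast hcard1
      _ = B * ((1024/Λ^2) * vfun Λ (t.length + 1)) * w₀ := by ring
  -- bound on K2 terms
  have hbound2 : ∀ k ∈ K2, |φ (GminusF s e t k) - ψ (GminusF s e t k)|
      ≤ B * ((9/Λ^2) * (1/((k:ℕ):ℝ)^2 + 1/((t.length - 1 - k : ℕ):ℝ)^2)
          * vfun Λ (t.length + 1)) * w₀ := by
    intro k hk
    rw [hK2, Finset.mem_filter] at hk
    obtain ⟨hkm, hkend⟩ := hk
    rw [KminusF, Finset.mem_filter, Finset.mem_range] at hkm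
    obtain ⟨hklt, hkget⟩ := hkm
    obtain ⟨hk3, hor⟩ := sminus_bounds hloop hred hkget
    have hk4 : k + 4 ≤ t.length := by
      rcases hor with h | h
      · omega
      · exact h
    have hdrop_ne : ¬ (t.drop (k+1)).isEmpty = true := by
      rw [List.isEmpty_iff]
      apply List.ne_nil_of_length_pos
      rw [List.length_drop]; omega
    have htake_ne : ¬ (t.take k).isEmpty = true := by
      rw [List.isEmpty_iff]
      apply List.ne_nil_of_length_pos
      rw [List.length_take]; omega
    have hGeq : GminusF s e t k
        = (t.drop (k+1)) ::ₘ (t.take k) ::ₘ s.erase (e :: t) := by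
      rw [GminusF]
      have hfil : ([t.drop (k+1), t.take k].filter fun x => !x.isEmpty)
          = [t.drop (k+1), t.take k] := by
        simp [List.filter, hdrop_ne, htake_ne]
      rw [hfil]
      simp [← Multiset.cons_coe, Multiset.cons_add]
    have hstr : IsStringM (GminusF s e t k) := by
      rw [hGeq]
      intro g hg
      rcases Multiset.mem_cons.mp hg with h | h
      · subst h
        have := isLoop_sminus_right hloop hkget (by omega)
        exact ⟨this.2, this.1⟩
      rcases Multiset.mem_cons.mp h with h | h
      · subst h
        have := isLoop_sminus_left hloop hkget (by omega)
        exact ⟨this.2, this.1⟩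
      · exact hs.erase _ g h
    have hwg : wfun Λ (GminusF s e t k)
        = vfun Λ (t.length - 1 - k) * (vfun Λ k * w₀) := by
      rw [hGeq, wfun_cons, wfun_cons, List.length_take, List.length_drop,
        show t.length - (k+1) = t.length - 1 - k by omega,
        show min k t.length = k by omega]
    have hsp := vfun_split_neg hL hΛ (a := k) (b := t.length - 1 - k)
      (m := t.length + 1) (by omega) (by omega) (by omega)
    calc |φ (GminusF s e t k) - ψ (GminusF s e t k)|
        ≤ B * wfun Λ (GminusF s e t k) := hDB _ hstr
      _ = B * (vfun Λ k * vfun Λ (t.length - 1 - k)) * w₀ := by rw [hwg]; ring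
      _ ≤ B * ((9/Λ^2) * (1/((k:ℕ):ℝ)^2 + 1/((t.length - 1 - k : ℕ):ℝ)^2)
            * vfun Λ (t.length + 1)) * w₀ := by
          apply mul_le_mul_of_nonneg_right _ (le_of_lt hw0)
          exact mul_le_mul_of_nonneg_left hsp hB0
  have hsumA : ∑ k ∈ K2, (1:ℝ)/((k:ℕ):ℝ)^2 ≤ 1/2 := by
    apply sum_idx_bound (M := t.length) (f := fun k => k)
    · intro k hk
      rw [hK2, Finset.mem_filter] at hk
      obtain ⟨hkm, -⟩ := hk
      rw [KminusF, Finset.mem_filter] at hkm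
      exact (sminus_bounds hloop hred hkm.2).1
    · intro k hk
      rw [hK2, Finset.mem_filter, KminusF, Finset.mem_filter, Finset.mem_range] at hk
      omega
    · intro k _ k' _ h; exact h
  have hsumB : ∑ k ∈ K2, (1:ℝ)/((t.length - 1 - k : ℕ):ℝ)^2 ≤ 1/2 := by
    apply sum_idx_bound (M := t.length) (f := fun k => t.length - 1 - k)
    · intro k hk
      rw [hK2, Finset.mem_filter] at hk
      obtain ⟨hkm, hke⟩ := hk
      rw [KminusF, Finset.mem_filter] at hkm
      have := sminus_bounds hloop hred hkm.2
      rw [Finset.mem_range] at hkm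
      omega
    · intro k _; omega
    · intro k hk k' hk' h
      rw [hK2, Finset.mem_filter, KminusF, Finset.mem_filter, Finset.mem_range] at hk hk'
      omega
  have hsum2 : ∑ k ∈ K2, |φ (GminusF s e t k) - ψ (GminusF s e t k)|
      ≤ B * ((9/Λ^2) * vfun Λ (t.length + 1)) * w₀ := by
    refine le_trans (Finset.sum_le_sum hbound2) ?_
    have hfact : ∀ k, B * ((9/Λ^2) * (1/((k:ℕ):ℝ)^2 + 1/((t.length - 1 - k : ℕ):ℝ)^2)
          * vfun Λ (t.length + 1)) * w₀
        = (B * (9/Λ^2) * vfun Λ (t.length + 1) * w₀)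
          * (1/((k:ℕ):ℝ)^2 + 1/((t.length - 1 - k : ℕ):ℝ)^2) := by
      intro k; ring
    rw [Finset.sum_congr rfl (fun k _ => hfact k), ← Finset.mul_sum]
    have hS : ∑ k ∈ K2, (1/((k:ℕ):ℝ)^2 + 1/((t.length - 1 - k : ℕ):ℝ)^2) ≤ 1 := by
      rw [Finset.sum_add_distrib]
      linarith
    have hc0 : 0 ≤ B * (9/Λ^2) * vfun Λ (t.length + 1) * w₀ := by positivity
    calc (B * (9/Λ^2) * vfun Λ (t.length + 1) * w₀)
          * ∑ k ∈ K2, (1/((k:ℕ):ℝ)^2 + 1/((t.length - 1 - k : ℕ):ℝ)^2)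
        ≤ (B * (9/Λ^2) * vfun Λ (t.length + 1) * w₀) * 1 :=
          mul_le_mul_of_nonneg_left hS hc0
      _ = B * ((9/Λ^2) * vfun Λ (t.length + 1)) * w₀ := by ring
  rw [← hsplit]
  rw [wfun_s_eq' hst]
  have hΛ2 : (8264:ℝ) ≤ Λ^2 := by nlinarith
  have hclean : B * ((1024/Λ^2) * vfun Λ (t.length + 1)) * w₀
      + B * ((9/Λ^2) * vfun Λ (t.length + 1)) * w₀
      ≤ (1/8) * B * (vfun Λ (t.length + 1) * w₀) := by
    have h1 : (1033:ℝ)/Λ^2 ≤ 1/8 := by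
      rw [div_le_div_iff₀ (by positivity) (by norm_num)]
      linarith
    have hBw : 0 ≤ B * (vfun Λ (t.length + 1) * w₀) := by positivity
    calc B * ((1024/Λ^2) * vfun Λ (t.length + 1)) * w₀
        + B * ((9/Λ^2) * vfun Λ (t.length + 1)) * w₀
        = (1033/Λ^2) * (B * (vfun Λ (t.length + 1) * w₀)) := by ring
      _ ≤ (1/8) * (B * (vfun Λ (t.length + 1) * w₀)) :=
          mul_le_mul_of_nonneg_right h1 hBw
      _ = (1/8) * B * (vfun Λ (t.length + 1) * w₀) := by ring
  calc (∑ k ∈ K1, |φ (GminusF s e t k) - ψ (GminusF s e t k)|)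
      + ∑ k ∈ K2, |φ (GminusF s e t k) - ψ (GminusF s e t k)|
      ≤ B * ((1024/Λ^2) * vfun Λ (t.length + 1)) * w₀
        + B * ((9/Λ^2) * vfun Λ (t.length + 1)) * w₀ := add_le_add hsum1 hsum2
    _ ≤ (1/8) * B * (vfun Λ (t.length + 1) * w₀) := hclean

end CoreSums2

section CoreSums3
variable {d : ℕ} {L Λ : ℝ}
variable (hL : 1 ≤ L) (hΛ : L * 59049 ≤ Λ)
variable {B : ℝ} (hB0 : 0 ≤ B) {φ ψ : Multiset (List (Edge d)) → ℝ}
variable (hDB : ∀ s', IsStringM s' → |φ s' - ψ s'| ≤ B * wfun Λ s')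
variable {s : Multiset (List (Edge d))} {e : Edge d} {t : List (Edge d)}
variable (hs : IsStringM s) (hst : (e :: t) ∈ s)

lemma plaqEdges_length (c : Vtx d) (i j : Fin d) : (plaqEdges c i j).length = 4 := rfl

include hL hΛ hB0 hDB hs hst in
lemma dplus_sum_bound :
    ∑ z ∈ TplusF e, |φ (HplusF s e t z) - ψ (HplusF s e t z)|
      ≤ (4*((d:ℝ)*d)) * Λ^4 * B * wfun Λ s := by
  have hloop : IsLoop (e :: t) := (hs _ hst).2
  have hΛpos := lam_pos hL hΛ
  have hΛ1 := lam_one hL hΛ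
  have hw0 : 0 < wfun Λ (s.erase (e :: t)) := wfun_pos hΛpos _
  have hvm : 0 < vfun Λ (t.length + 1) := vfun_pos hΛpos _
  set w₀ := wfun Λ (s.erase (e :: t)) with hw₀
  set c₀ := Λ^4 * B * (vfun Λ (t.length + 1) * w₀) with hc₀
  have hc0nn : 0 ≤ c₀ := by rw [hc₀]; positivity
  have hbound : ∀ z ∈ TplusF e,
      |φ (HplusF s e t z) - ψ (HplusF s e t z)| ≤ c₀ := by
    intro z hz
    rw [TplusF, Finset.mem_filter] at hz
    obtain ⟨-, hne, hget⟩ := hz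
    set q : Plaq d := ⟨cornerOf e z.1 z.2.1 z.2.2, z.2.1, z.2.2, hne⟩ with hq
    have hpe : plaqEdges (cornerOf e z.1 z.2.1 z.2.2) z.2.1 z.2.2 = q.edges := rfl
    rw [hpe] at hget
    have hmlt : z.1 < 4 := by
      have := (List.get?_eq_some.mp hget).1
      rwa [plaq_edges_length] at this
    have hlloop := isLoop_dplus hloop hget
    have hlen : (e :: (q.edges.drop (z.1+1) ++ q.edges.take z.1 ++ e :: t)).length
        = (t.length + 1) + 4 := by
      simp only [List.length_cons, List.length_append, List.length_drop,
        List.length_take, plaq_edges_length]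
      omega
    have hstr : IsStringM (HplusF s e t z) := by
      rw [HplusF, hpe]
      intro g hg
      rcases Multiset.mem_cons.mp hg with h | h
      · subst h
        exact ⟨List.cons_ne_nil _ _, hlloop⟩
      · exact hs.erase _ g h
    have hwH : wfun Λ (HplusF s e t z) = vfun Λ ((t.length + 1) + 4) * w₀ := by
      rw [HplusF, hpe, wfun_cons, hlen]
    have hv := vfun_def4 hL hΛ (t.length + 1)
    calc |φ (HplusF s e t z) - ψ (HplusF s e t z)|
        ≤ B * wfun Λ (HplusF s e t z) := hDB _ hstr
      _ = B * vfun Λ ((t.length + 1) + 4) * w₀ := by rw [hwH]; ring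
      _ ≤ B * (Λ^4 * vfun Λ (t.length + 1)) * w₀ := by
          apply mul_le_mul_of_nonneg_right _ (le_of_lt hw0)
          exact mul_le_mul_of_nonneg_left hv hB0
      _ = c₀ := by rw [hc₀]; ring
  calc ∑ z ∈ TplusF e, |φ (HplusF s e t z) - ψ (HplusF s e t z)|
      ≤ (TplusF e).card • c₀ := Finset.sum_le_card_nsmul _ _ _ hbound
    _ = ((TplusF e).card : ℝ) * c₀ := by rw [nsmul_eq_mul]
    _ ≤ (4*((d:ℝ)*d)) * c₀ := by
        apply mul_le_mul_of_nonneg_right _ hc0nn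
        have := TplusF_card e
        calc ((TplusF e).card : ℝ) ≤ ((4 * (d * d) : ℕ) : ℝ) := by exact_mod_cast this
          _ = 4*((d:ℝ)*d) := by push_cast; ring
    _ = (4*((d:ℝ)*d)) * Λ^4 * B * (vfun Λ (t.length + 1) * w₀) := by rw [hc₀]; ring
    _ = (4*((d:ℝ)*d)) * Λ^4 * B * wfun Λ s := by rw [← wfun_s_eq' hst]

include hL hΛ hB0 hDB hs hst in
lemma dminus_sum_bound :
    ∑ z ∈ TminusF e, |φ (HminusF s e t z) - ψ (HminusF s e t z)|
      ≤ (4*((d:ℝ)*d)) * Λ^4 * B * wfun Λ s := by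
  have hloop : IsLoop (e :: t) := (hs _ hst).2
  have hΛpos := lam_pos hL hΛ
  have hΛ1 := lam_one hL hΛ
  have hw0 : 0 < wfun Λ (s.erase (e :: t)) := wfun_pos hΛpos _
  have hvm : 0 < vfun Λ (t.length + 1) := vfun_pos hΛpos _
  set w₀ := wfun Λ (s.erase (e :: t)) with hw₀
  set c₀ := Λ^4 * B * (vfun Λ (t.length + 1) * w₀) with hc₀
  have hc0nn : 0 ≤ c₀ := by rw [hc₀]; positivity
  have hbound : ∀ z ∈ TminusF e,
      |φ (HminusF s e t z) - ψ (HminusF s e t z)| ≤ c₀ := by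
    intro z hz
    rw [TminusF, Finset.mem_filter] at hz
    obtain ⟨-, hne, hget⟩ := hz
    set q : Plaq d := ⟨cornerOf (erev e) z.1 z.2.1 z.2.2, z.2.1, z.2.2, hne⟩ with hq
    have hpe : plaqEdges (cornerOf (erev e) z.1 z.2.1 z.2.2) z.2.1 z.2.2 = q.edges := rfl
    rw [hpe] at hget
    have hmlt : z.1 < 4 := by
      have := (List.get?_eq_some.mp hget).1
      rwa [plaq_edges_length] at this
    have hlloop := isLoop_dminus hloop hget
    have hlen : (q.edges.drop (z.1+1) ++ q.edges.take z.1 ++ t).length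
        = (t.length + 1) + 2 := by
      simp only [List.length_append, List.length_drop,
        List.length_take, plaq_edges_length]
      omega
    have hstr : IsStringM (HminusF s e t z) := by
      rw [HminusF, hpe]
      intro g hg
      rcases Multiset.mem_cons.mp hg with h | h
      · subst h
        exact ⟨hlloop.2, hlloop.1⟩
      · exact hs.erase _ g h
    have hwH : wfun Λ (HminusF s e t z) = vfun Λ ((t.length + 1) + 2) * w₀ := by
      rw [HminusF, hpe, wfun_cons, hlen]
    have hv := vfun_def2 hL hΛ (t.length + 1)
    have hΛ24 : Λ^2 ≤ Λ^4 := pow_le_pow_right₀ hΛ1 (by norm_num)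
    calc |φ (HminusF s e t z) - ψ (HminusF s e t z)|
        ≤ B * wfun Λ (HminusF s e t z) := hDB _ hstr
      _ = B * vfun Λ ((t.length + 1) + 2) * w₀ := by rw [hwH]; ring
      _ ≤ B * (Λ^2 * vfun Λ (t.length + 1)) * w₀ := by
          apply mul_le_mul_of_nonneg_right _ (le_of_lt hw0)
          exact mul_le_mul_of_nonneg_left hv hB0
      _ ≤ B * (Λ^4 * vfun Λ (t.length + 1)) * w₀ := by
          apply mul_le_mul_of_nonneg_right _ (le_of_lt hw0)
          apply mul_le_mul_of_nonneg_left _ hB0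
          exact mul_le_mul_of_nonneg_right hΛ24 (le_of_lt hvm)
      _ = c₀ := by rw [hc₀]; ring
  calc ∑ z ∈ TminusF e, |φ (HminusF s e t z) - ψ (HminusF s e t z)|
      ≤ (TminusF e).card • c₀ := Finset.sum_le_card_nsmul _ _ _ hbound
    _ = ((TminusF e).card : ℝ) * c₀ := by rw [nsmul_eq_mul]
    _ ≤ (4*((d:ℝ)*d)) * c₀ := by
        apply mul_le_mul_of_nonneg_right _ hc0nn
        have := TminusF_card e
        calc ((TminusF e).card : ℝ) ≤ ((4 * (d * d) : ℕ) : ℝ) := by exact_mod_cast this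
          _ = 4*((d:ℝ)*d) := by push_cast; ring
    _ = (4*((d:ℝ)*d)) * Λ^4 * B * (vfun Λ (t.length + 1) * w₀) := by rw [hc₀]; ring
    _ = (4*((d:ℝ)*d)) * Λ^4 * B * wfun Λ s := by rw [← wfun_s_eq' hst]

end CoreSums3

section CoreFinal
variable {d : ℕ} {L Λ : ℝ}
variable (hL : 1 ≤ L) (hΛ : L * 59049 ≤ Λ)
variable {B : ℝ} (hB0 : 0 ≤ B) {φ ψ : Multiset (List (Edge d)) → ℝ}
variable (hDB : ∀ s', IsStringM s' → |φ s' - ψ s'| ≤ B * wfun Λ s')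

lemma abs_comb (a b c f : ℝ) : |a - b + c - f| ≤ |a| + |b| + |c| + |f| := by
  have h1 := abs_add_le (a - b + c) (-f)
  have h2 := abs_add_le (a - b) c
  have h3 := abs_add_le a (-b)
  rw [abs_neg] at h1 h3
  have e1 : a - b + c - f = a - b + c + -f := by ring
  have e2 : a - b = a + -b := by ring
  rw [e1, e2]
  rw [e2] at h1 h2
  linarith

include hL hΛ hB0 hDB in
lemma core_bound {β : ℝ}
    (hβ : |β| * (8*((d:ℝ)*d) * Λ^4) ≤ 1/8)
    (hMφ : ∀ s, IsStringM s → s ≠ 0 → ∀ l ∈ s, ∀ i < l.length, SatisfiesMLE β φ s l i)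
    (hMψ : ∀ s, IsStringM s → s ≠ 0 → ∀ l ∈ s, ∀ i < l.length, SatisfiesMLE β ψ s l i)
    {s : Multiset (List (Edge d))} (hred : RedS s) (hsne : s ≠ 0) :
    |φ s - ψ s| ≤ (1/2) * B * wfun Λ s := by
  obtain ⟨l, hls⟩ := Multiset.exists_mem_of_ne_zero hsne
  obtain ⟨hlne, -⟩ := hred.1 l hls
  cases l with
  | nil => exact absurd rfl hlne
  | cons e t =>
  have hmφ := hMφ s hred.1 hsne _ hls 0 (by simp)
  have hmψ := hMψ s hred.1 hsne _ hls 0 (by simp)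
  rw [SatisfiesMLE, sminusSet_eq, splusSet_eq, dminusSet_eq, dplusSet_eq,
    finsum_mem_coe_finset, finsum_mem_coe_finset, finsum_mem_coe_finset,
    finsum_mem_coe_finset] at hmφ hmψ
  have hsM : IsStringM s := hred.1
  have hredl : Red (e :: t) := hred.2 _ hls
  have hw : 0 < wfun Λ s := wfun_pos (lam_pos hL hΛ) s
  have hBw : 0 ≤ B * wfun Λ s := by positivity
  -- difference equation
  have heq : φ s - ψ s
      = ((∑ x ∈ (KminusF e t).image (GminusF s e t), (φ x - ψ x))
        - (∑ x ∈ (KplusF e t).image (GplusF s e t), (φ x - ψ x)))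
        + β * (∑ x ∈ (TminusF e).image (HminusF s e t), (φ x - ψ x))
        - β * (∑ x ∈ (TplusF e).image (HplusF s e t), (φ x - ψ x)) := by
    rw [hmφ, hmψ]
    simp only [Finset.sum_sub_distrib]
    ring
  have habs : |φ s - ψ s|
      ≤ (∑ x ∈ (KminusF e t).image (GminusF s e t), |φ x - ψ x|)
        + (∑ x ∈ (KplusF e t).image (GplusF s e t), |φ x - ψ x|)
        + |β| * (∑ x ∈ (TminusF e).image (HminusF s e t), |φ x - ψ x|)
        + |β| * (∑ x ∈ (TplusF e).image (HplusF s e t), |φ x - ψ x|) := by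
    rw [heq]
    have h0 := abs_comb
      (∑ x ∈ (KminusF e t).image (GminusF s e t), (φ x - ψ x))
      (∑ x ∈ (KplusF e t).image (GplusF s e t), (φ x - ψ x))
      (β * (∑ x ∈ (TminusF e).image (HminusF s e t), (φ x - ψ x)))
      (β * (∑ x ∈ (TplusF e).image (HplusF s e t), (φ x - ψ x)))
    refine le_trans h0 ?_
    have hs1 := Finset.abs_sum_le_sum_abs (fun x => φ x - ψ x)
      ((KminusF e t).image (GminusF s e t))
    have hs2 := Finset.abs_sum_le_sum_abs (fun x => φ x - ψ x)
      ((KplusF e t).image (GplusF s e t))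
    have hs3 := Finset.abs_sum_le_sum_abs (fun x => φ x - ψ x)
      ((TminusF e).image (HminusF s e t))
    have hs4 := Finset.abs_sum_le_sum_abs (fun x => φ x - ψ x)
      ((TplusF e).image (HplusF s e t))
    rw [abs_mul, abs_mul]
    have hb3 := mul_le_mul_of_nonneg_left hs3 (abs_nonneg β)
    have hb4 := mul_le_mul_of_nonneg_left hs4 (abs_nonneg β)
    linarith
  -- pull sums back to index sets
  have hi1 : ∑ x ∈ (KminusF e t).image (GminusF s e t), |φ x - ψ x|
      ≤ ∑ k ∈ KminusF e t, |φ (GminusF s e t k) - ψ (GminusF s e t k)| :=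
    sum_image_le_nonneg _ _ (fun b => abs_nonneg _)
  have hi2 : ∑ x ∈ (KplusF e t).image (GplusF s e t), |φ x - ψ x|
      ≤ ∑ k ∈ KplusF e t, |φ (GplusF s e t k) - ψ (GplusF s e t k)| :=
    sum_image_le_nonneg _ _ (fun b => abs_nonneg _)
  have hi3 : ∑ x ∈ (TminusF e).image (HminusF s e t), |φ x - ψ x|
      ≤ ∑ z ∈ TminusF e, |φ (HminusF s e t z) - ψ (HminusF s e t z)| :=
    sum_image_le_nonneg _ _ (fun b => abs_nonneg _)
  have hi4 : ∑ x ∈ (TplusF e).image (HplusF s e t), |φ x - ψ x|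
      ≤ ∑ z ∈ TplusF e, |φ (HplusF s e t z) - ψ (HplusF s e t z)| :=
    sum_image_le_nonneg _ _ (fun b => abs_nonneg _)
  have hb1 := sminus_sum_bound hL hΛ hB0 hDB hsM hls hredl
  have hb2 := splus_sum_bound hL hΛ hB0 hDB hsM hls hredl
  have hb3 := dminus_sum_bound hL hΛ hB0 hDB hsM hls
  have hb4 := dplus_sum_bound hL hΛ hB0 hDB hsM hls
  have hβnn := abs_nonneg β
  have hd1 : |β| * (∑ x ∈ (TminusF e).image (HminusF s e t), |φ x - ψ x|)
      ≤ |β| * ((4*((d:ℝ)*d)) * Λ^4 * B * wfun Λ s) :=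
    mul_le_mul_of_nonneg_left (le_trans hi3 hb3) hβnn
  have hd2 : |β| * (∑ x ∈ (TplusF e).image (HplusF s e t), |φ x - ψ x|)
      ≤ |β| * ((4*((d:ℝ)*d)) * Λ^4 * B * wfun Λ s) :=
    mul_le_mul_of_nonneg_left (le_trans hi4 hb4) hβnn
  have hdtot : |β| * ((4*((d:ℝ)*d)) * Λ^4 * B * wfun Λ s)
      + |β| * ((4*((d:ℝ)*d)) * Λ^4 * B * wfun Λ s)
      ≤ (1/8) * (B * wfun Λ s) := by
    have e1 : |β| * ((4*((d:ℝ)*d)) * Λ^4 * B * wfun Λ s)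
        + |β| * ((4*((d:ℝ)*d)) * Λ^4 * B * wfun Λ s)
        = (|β| * (8*((d:ℝ)*d) * Λ^4)) * (B * wfun Λ s) := by ring
    rw [e1]
    exact mul_le_mul_of_nonneg_right hβ hBw
  calc |φ s - ψ s|
      ≤ (∑ x ∈ (KminusF e t).image (GminusF s e t), |φ x - ψ x|)
        + (∑ x ∈ (KplusF e t).image (GplusF s e t), |φ x - ψ x|)
        + |β| * (∑ x ∈ (TminusF e).image (HminusF s e t), |φ x - ψ x|)
        + |β| * (∑ x ∈ (TplusF e).image (HplusF s e t), |φ x - ψ x|) := habs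
    _ ≤ (1/8) * B * wfun Λ s + (1/4) * B * wfun Λ s + (1/8) * (B * wfun Λ s) := by
        have g1 := le_trans hi1 hb1
        have g2 := le_trans hi2 hb2
        linarith
    _ = (1/2) * B * wfun Λ s := by ring

end CoreFinal

/-- Uniqueness of solutions of the master loop equation: for every `L ≥ 1` there exists
`β_*(L,d) > 0` such that for `|β| ≤ β_*(L,d)`, any two functions on strings taking the
value `1` at the empty string, invariant under backtrack erasures, bounded by `L^{|s|}`,
and satisfying the master loop equation at every fixed location, coincide on all strings. -/
theorem stmt3 {d : ℕ} (hd : 2 ≤ d) (L : ℝ) (hL : 1 ≤ L) :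
    ∃ βst : ℝ, 0 < βst ∧ ∀ β : ℝ, |β| ≤ βst →
      ∀ φ ψ : Multiset (List (Edge d)) → ℝ,
        φ 0 = 1 → ψ 0 = 1 →
        BacktrackInvariant φ → BacktrackInvariant ψ →
        (∀ s, IsStringM s → |φ s| ≤ L ^ strLenM s) →
        (∀ s, IsStringM s → |ψ s| ≤ L ^ strLenM s) →
        (∀ s, IsStringM s → s ≠ 0 → ∀ l ∈ s, ∀ i < l.length, SatisfiesMLE β φ s l i) →
        (∀ s, IsStringM s → s ≠ 0 → ∀ l ∈ s, ∀ i < l.length, SatisfiesMLE β ψ s l i) →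
        ∀ s, IsStringM s → φ s = ψ s := by
  set Λ : ℝ := L * 59049 with hΛdef
  have hΛ : L * 59049 ≤ Λ := le_refl _
  have hΛpos : 0 < Λ := lam_pos hL hΛ
  have hdpos : (0:ℝ) < (d:ℝ)*d := by
    have h2 : (2:ℝ) ≤ (d:ℝ) := by exact_mod_cast hd
    nlinarith
  refine ⟨1/(64 * (((d:ℝ)*d) * Λ^4)), by positivity, ?_⟩
  intro β hβ φ ψ hφ0 hψ0 hBIφ hBIψ hbφ hbψ hMφ hMψ
  set RS : Set ℝ :=
    {x : ℝ | ∃ s : Multiset (List (Edge d)), RedS s ∧ x = |φ s - ψ s| / wfun Λ s}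
    with hRS
  have h0RS : (0:ℝ) ∈ RS := by
    refine ⟨0, ⟨?_, ?_⟩, ?_⟩
    · intro l hl; exact absurd hl (Multiset.notMem_zero l)
    · intro l hl; exact absurd hl (Multiset.notMem_zero l)
    · rw [hφ0, hψ0, wfun_zero]; norm_num
  have hbdd : BddAbove RS := by
    refine ⟨2, ?_⟩
    rintro x ⟨s, hsred, rfl⟩
    have hw : 0 < wfun Λ s := wfun_pos hΛpos s
    rw [div_le_iff₀ hw]
    have h1 : |φ s - ψ s| ≤ |φ s| + |ψ s| := abs_sub _ _
    have h2 := hbφ s hsred.1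
    have h3 := hbψ s hsred.1
    have h4 := pow_strLen_le_wfun hL hΛ s
    linarith
  set B := sSup RS with hB
  have hB0 : 0 ≤ B := le_csSup hbdd h0RS
  have hDB : ∀ s', IsStringM s' → |φ s' - ψ s'| ≤ B * wfun Λ s' := by
    intro s' hs'
    obtain ⟨sb, hsbred, hwle, -, hval⟩ := reduce_exists hL hΛ (strLenM s') s' le_rfl hs'
    have he1 : φ s' = φ sb := hval φ hBIφ
    have he2 : ψ s' = ψ sb := hval ψ hBIψ
    have hmem : |φ sb - ψ sb| / wfun Λ sb ∈ RS := ⟨sb, hsbred, rfl⟩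
    have hle := le_csSup hbdd hmem
    have hwb : 0 < wfun Λ sb := wfun_pos hΛpos _
    rw [he1, he2]
    calc |φ sb - ψ sb| = (|φ sb - ψ sb| / wfun Λ sb) * wfun Λ sb := by field_simp
      _ ≤ B * wfun Λ sb := mul_le_mul_of_nonneg_right hle (le_of_lt hwb)
      _ ≤ B * wfun Λ s' := mul_le_mul_of_nonneg_left hwle hB0
  have hβ' : |β| * (8*((d:ℝ)*d) * Λ^4) ≤ 1/8 := by
    have hc : (0:ℝ) ≤ 8*((d:ℝ)*d)*Λ^4 := by positivity
    calc |β| * (8*((d:ℝ)*d)*Λ^4)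
        ≤ (1/(64 * (((d:ℝ)*d) * Λ^4))) * (8*((d:ℝ)*d)*Λ^4) :=
          mul_le_mul_of_nonneg_right hβ hc
      _ = 1/8 := by field_simp; ring
  have hkey : ∀ x ∈ RS, x ≤ (1/2) * B := by
    rintro x ⟨s, hsred, rfl⟩
    by_cases hs0 : s = 0
    · subst hs0
      rw [hφ0, hψ0, wfun_zero]
      have : |(1:ℝ) - 1| / 1 = 0 := by norm_num
      rw [this]
      nlinarith
    · have hcb := core_bound hL hΛ hB0 hDB hβ' hMφ hMψ hsred hs0
      rw [div_le_iff₀ (wfun_pos hΛpos s)]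
      calc |φ s - ψ s| ≤ (1/2) * B * wfun Λ s := hcb
        _ = 1/2 * B * wfun Λ s := by ring
  have hBB : B ≤ (1/2) * B := csSup_le ⟨0, h0RS⟩ hkey
  have hB00 : B = 0 := by linarith
  intro s hs
  have hfin := hDB s hs
  rw [hB00, zero_mul] at hfin
  have := abs_nonneg (φ s - ψ s)
  have habs0 : |φ s - ψ s| = 0 := le_antisymm hfin this
  have := abs_eq_zero.mp habs0
  linarith [this]


end
end

section
/- Let s = (ℓ₁,…,ℓₙ) be a non-empty ordered string of rooted loops in ℤ^d, let δ = δ(s) = (δ₁,…,δₙ), and let 𝐞_s be the first edge of ℓ₁. Then: (a) there is an injective map s' ↦ h_{s'} from 𝕊₊(𝐞_s,s) to {1,…,δ₁−1} such that δ(s') ≤ (δ₁ − h_{s'}, h_{s'}, δ₂, …, δₙ) componentwise for every positive splitting s'; (b) every negative splitting s' ∈ 𝕊₋(𝐞_s,s) satisfies either δ(s') ≤ (δ₁−2, δ₂,…,δₙ) componentwise (respectively δ(s') ≤ (δ₂,…,δₙ) when δ₁ = 2), or δ(s') ≤ (δ₁ − g_{s'}, g_{s'}, δ₂,…,δₙ)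 componentwise for some g_{s'} ∈ {1,…,δ₁−1}, and the assignment s' ↦ g_{s'} can be chosen injective on the set of negative splittings of the latter kind. -/
open scoped BigOperators Classical
noncomputable section

/-- Positive splittings of an ordered string of rooted loops at the first edge `𝐞` of its
first loop: for each later occurrence `𝐞'` of the same lattice edge in the first loop
`ℓ₁ = 𝐞 π₂ 𝐞' π₃`, replace `ℓ₁` by the two rooted loops `𝐞 π₃` and `π₂ 𝐞'`, placed first. -/
def SplusL {d : ℕ} (s : List (List (Edge d))) : Set (List (List (Edge d))) :=
  {s' | ∃ (e : Edge d) (t : List (Edge d)) (rest : List (List (Edge d))) (k : ℕ),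
    s = (e :: t) :: rest ∧ t[k]? = some e ∧
    s' = (e :: t.drop (k + 1)) :: (t.take (k + 1)) :: rest}

/-- Negative splittings of an ordered string at the first edge of its first loop: for each
occurrence of `e⁻¹` in `ℓ₁ = 𝐞 π₂ 𝐞⁻¹ π₃`, replace `ℓ₁` by the loops `π₃` and `π₂`, placed
first (null loops being removed from the tuple). -/
def SminusL {d : ℕ} (s : List (List (Edge d))) : Set (List (List (Edge d))) :=
  {s' | ∃ (e : Edge d) (t : List (Edge d)) (rest : List (List (Edge d))) (k : ℕ),
    s = (e :: t) :: rest ∧ t[k]? = some (erev e) ∧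
    s' = ([t.drop (k + 1), t.take k].filter fun x => !x.isEmpty) ++ rest}

private lemma mem_splus' {d : ℕ} {e : Edge d} {t : List (Edge d)}
    {rest : List (List (Edge d))} {s' : List (List (Edge d))}
    (h : s' ∈ SplusL ((e :: t) :: rest)) :
    ∃ k, t[k]? = some e ∧
      s' = (e :: t.drop (k + 1)) :: (t.take (k + 1)) :: rest := by
  obtain ⟨e', t', rest', k, heq, hk, hs⟩ := h
  simp only [List.cons.injEq] at heq
  obtain ⟨⟨rfl, rfl⟩, rfl⟩ := heq
  exact ⟨k, hk, hs⟩

private lemma mem_sminus' {d : ℕ} {e : Edge d} {t : List (Edge d)}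
    {rest : List (List (Edge d))} {s' : List (List (Edge d))}
    (h : s' ∈ SminusL ((e :: t) :: rest)) :
    ∃ k, t[k]? = some (erev e) ∧
      s' = ([t.drop (k + 1), t.take k].filter fun x => !x.isEmpty) ++ rest := by
  obtain ⟨e', t', rest', k, heq, hk, hs⟩ := h
  simp only [List.cons.injEq] at heq
  obtain ⟨⟨rfl, rfl⟩, rfl⟩ := heq
  exact ⟨k, hk, hs⟩

/-- Chatterjee-type length bookkeeping for splittings: there is an injective map
`s' ↦ h_{s'} ∈ {1,…,δ₁−1}` on positive splittings with
`δ(s') ≤ (δ₁ − h_{s'}, h_{s'}, δ₂, …, δₙ)`, and every negative splitting either satisfies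
`δ(s') ≤ (δ₁−2, δ₂,…,δₙ)` (resp. `δ(s') ≤ (δ₂,…,δₙ)` when `δ₁ = 2`) or admits
`g_{s'} ∈ {1,…,δ₁−1}` with `δ(s') ≤ (δ₁ − g_{s'}, g_{s'}, δ₂,…,δₙ)`, the assignment
`s' ↦ g_{s'}` being injective on the negative splittings of the latter kind. -/
theorem stmt5 {d : ℕ} (hd : 2 ≤ d) (l₁ : List (Edge d)) (rest : List (List (Edge d)))
    (hloops : ∀ l ∈ l₁ :: rest, l ≠ [] ∧ IsLoop l) :
    (∃ h : {s' // s' ∈ SplusL (l₁ :: rest)} → ℕ,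
      Function.Injective h ∧
        ∀ s' : {s' // s' ∈ SplusL (l₁ :: rest)},
          1 ≤ h s' ∧ h s' ≤ l₁.length - 1 ∧
            List.Forall₂ (· ≤ ·) (s'.1.map List.length)
              ((l₁.length - h s') :: h s' :: rest.map List.length)) ∧
    (∃ (T : Set (List (List (Edge d)))) (g : T → ℕ),
      T ⊆ SminusL (l₁ :: rest) ∧ Function.Injective g ∧
        (∀ s' ∈ SminusL (l₁ :: rest), s' ∉ T →
          (List.Forall₂ (· ≤ ·) (s'.map List.length)
              ((l₁.length - 2) :: rest.map List.length) ∨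
            (l₁.length = 2 ∧
              List.Forall₂ (· ≤ ·) (s'.map List.length) (rest.map List.length)))) ∧
        ∀ s' : T, 1 ≤ g s' ∧ g s' ≤ l₁.length - 1 ∧
          List.Forall₂ (· ≤ ·) ((s' : List (List (Edge d))).map List.length)
            ((l₁.length - g s') :: g s' :: rest.map List.length)) := by

  obtain ⟨hne, -⟩ := hloops l₁ (List.mem_cons_self)
  obtain ⟨e, t, rfl⟩ : ∃ e t, l₁ = e :: t := by
    cases l₁ with
    | nil => exact absurd rfl hne
    | cons a b => exact ⟨a, b, rfl⟩
  have hrefl : List.Forall₂ (· ≤ ·) (rest.map List.length) (rest.map List.length) :=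
    List.forall₂_same.mpr fun x _ => le_refl x
  constructor
  · -- positive splittings
    refine ⟨fun s' => (s'.1.getD 1 []).length, ?_, ?_⟩
    · intro a b hab
      obtain ⟨ka, hka, hsa⟩ := mem_splus' a.2
      obtain ⟨kb, hkb, hsb⟩ := mem_splus' b.2
      have hla : ka < t.length := (List.getElem?_eq_some_iff.mp hka).1
      have hlb : kb < t.length := (List.getElem?_eq_some_iff.mp hkb).1
      have ea : (a.1.getD 1 []).length = ka + 1 := by
        rw [hsa]; simp [List.length_take]; omega
      have eb : (b.1.getD 1 []).length = kb + 1 := by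
        rw [hsb]; simp [List.length_take]; omega
      have hk : ka = kb := by simp only [ea, eb] at hab; omega
      exact Subtype.ext (by rw [hsa, hsb, hk])
    · intro s'
      obtain ⟨k, hk, hs⟩ := mem_splus' s'.2
      have hl : k < t.length := (List.getElem?_eq_some_iff.mp hk).1
      have eh : (s'.1.getD 1 []).length = k + 1 := by
        rw [hs]; simp [List.length_take]; omega
      simp only [eh]
      refine ⟨by omega, by simp; omega, ?_⟩
      rw [hs]
      simp only [List.map_cons, List.length_cons, List.length_drop, List.length_take]
      have e1 : t.length + 1 - (k + 1) = t.length - (k + 1) + 1 := by omega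
      have e2 : min (k + 1) t.length = k + 1 := by omega
      rw [e1, e2]
      exact List.Forall₂.cons (le_refl _) (List.Forall₂.cons (le_refl _) hrefl)
  · -- negative splittings
    refine ⟨{s' | ∃ k, t[k]? = some (erev e) ∧ t.take k ≠ [] ∧ t.drop (k + 1) ≠ [] ∧
        s' = (t.drop (k + 1)) :: (t.take k) :: rest},
      fun s' => ((s' : List (List (Edge d))).getD 1 []).length, ?_, ?_, ?_, ?_⟩
    · rintro s' ⟨k, hk, h1, h2, hs⟩
      exact ⟨e, t, rest, k, rfl, hk, by
        rw [hs]; simp [List.filter_cons, List.isEmpty_iff, h1, h2]⟩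
    · intro a b hab
      obtain ⟨ka, hka, ha1, ha2, hsa⟩ := a.2
      obtain ⟨kb, hkb, hb1, hb2, hsb⟩ := b.2
      have hla : ka < t.length := (List.getElem?_eq_some_iff.mp hka).1
      have hlb : kb < t.length := (List.getElem?_eq_some_iff.mp hkb).1
      have ea : ((a : List (List (Edge d))).getD 1 []).length = ka := by
        rw [hsa]; simp [List.length_take]; omega
      have eb : ((b : List (List (Edge d))).getD 1 []).length = kb := by
        rw [hsb]; simp [List.length_take]; omega
      have hk : ka = kb := by simp only [ea, eb] at hab; exact hab
      exact Subtype.ext (by rw [hsa, hsb, hk])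
    · intro s' hs' hnT
      obtain ⟨k, hk, hs⟩ := mem_sminus' hs'
      have hl : k < t.length := (List.getElem?_eq_some_iff.mp hk).1
      by_cases h1 : t.take k = []
      · have hk0 : k = 0 := by
          rcases List.take_eq_nil_iff.mp h1 with h | h
          · exact h
          · exfalso; rw [h] at hl; simp at hl
        by_cases h2 : t.drop (k + 1) = []
        · have hlen : t.length = 1 := by
            have := List.drop_eq_nil_iff.mp h2; omega
          right
          refine ⟨by simp [hlen], ?_⟩
          rw [hs]
          simp only [List.filter_cons, h1, h2, List.isEmpty_nil]
          simpa using hrefl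
        · left
          rw [hs]
          simp only [List.filter_cons, h1, List.isEmpty_nil]
          have h2' : (t.drop (k + 1)).isEmpty = false := by
            simpa [List.isEmpty_iff] using h2
          rw [h2']
          simp only [Bool.not_false, Bool.not_true, if_true, if_false, List.filter_nil]
          simp only [List.cons_append, List.nil_append, List.map_cons, List.length_drop,
            List.length_cons]
          exact List.Forall₂.cons (by omega) hrefl
      · by_cases h2 : t.drop (k + 1) = []
        · left
          have hlen : t.length = k + 1 := by
            have := List.drop_eq_nil_iff.mp h2; omega
          rw [hs]
          simp only [List.filter_cons, h2, List.isEmpty_nil]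
          have h1' : (t.take k).isEmpty = false := by
            simpa [List.isEmpty_iff] using h1
          rw [h1']
          simp only [Bool.not_false, Bool.not_true, if_true, if_false, List.filter_nil]
          simp only [List.cons_append, List.nil_append, List.map_cons, List.length_take,
            List.length_cons]
          exact List.Forall₂.cons (by simp [List.length_take]; omega) hrefl
        · exact absurd ⟨k, hk, h1, h2, by
            rw [hs]; simp [List.filter_cons, List.isEmpty_iff, h1, h2]⟩ hnT
    · intro x
      obtain ⟨k, hk, h1, h2, hs⟩ := x.2
      have hl : k < t.length := (List.getElem?_eq_some_iff.mp hk).1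
      have hk1 : 1 ≤ k := by
        rcases Nat.eq_zero_or_pos k with h | h
        · rw [h] at h1; simp at h1
        · exact h
      have eg : ((x : List (List (Edge d))).getD 1 []).length = k := by
        rw [hs]; simp [List.length_take]; omega
      simp only [eg]
      refine ⟨hk1, by simp; omega, ?_⟩
      rw [hs]
      simp only [List.map_cons, List.length_cons, List.length_drop, List.length_take]
      have e2 : min k t.length = k := by omega
      rw [e2]
      exact List.Forall₂.cons (by omega) (List.Forall₂.cons (le_refl _) hrefl)

end
end

section
/- There exists a constant C ≥ 1, depending only on the dimension d, such that for every loop ℓ in ℤ^d and every integer A ≥ 1, the set of ℓ-connected plaquette assignments K with area(K) = A is finite with cardinality at most C^{|ℓ|}·C^A. -/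
open scoped BigOperators Classical
noncomputable section

/-- A plaquette touches the loop `l` if one of its four edges coincides, as an unoriented
edge, with an edge of `l`. -/
def TouchesLoop {d : ℕ} (q : Plaq d) (l : List (Edge d)) : Prop :=
  ∃ e ∈ q.edges, e ∈ l ∨ erev e ∈ l

/-- `K` is `l`-connected: every connected component of its support contains a plaquette
one of whose edges coincides, as an unoriented edge, with an edge of `l`. -/
def LConnected {d : ℕ} (l : List (Edge d)) (K : Plaq d → ℕ) : Prop :=
  ∀ q ∈ psupp K, ∃ q' ∈ psupp K,
    Relation.ReflTransGen (fun a b => a ∈ psupp K ∧ b ∈ psupp K ∧ SharesEdge a b) q q' ∧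
      TouchesLoop q' l


section Helpers
variable {d : ℕ}
-- basic plaq lemmas
theorem Plaq.rev_rev {d : ℕ} (P : Plaq d) : P.rev.rev = P := rfl

theorem Plaq.pos_or_rev_pos {d : ℕ} (P : Plaq d) : P.posOriented ∨ P.rev.posOriented := by
  rcases lt_or_gt_of_ne P.hdir with h | h
  · exact Or.inr h
  · exact Or.inl h

theorem Plaq.not_pos_rev {d : ℕ} (P : Plaq d) (h : P.posOriented) : ¬ P.rev.posOriented := by
  simp only [Plaq.posOriented, Plaq.rev] at *
  omega

theorem sharesEdge_symm {d : ℕ} {P Q : Plaq d} (h : SharesEdge P Q) : SharesEdge Q P := by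
  obtain ⟨e, he, h1 | h2⟩ := h
  · exact ⟨e, h1, Or.inl he⟩
  · exact ⟨erev e, h2, Or.inr he⟩

theorem single01 {d : ℕ} (j i : Fin d) : (0:ℤ) ≤ (Pi.single j 1 : Vtx d) i ∧ (Pi.single j 1 : Vtx d) i ≤ 1 := by
  rcases eq_or_ne i j with rfl | h
  · simp
  · simp [Pi.single_apply, h]

theorem single_sum01 {d : ℕ} {j k : Fin d} (hjk : j ≠ k) (i : Fin d) :
    (0:ℤ) ≤ (Pi.single j 1 : Vtx d) i + (Pi.single k 1 : Vtx d) i ∧ (Pi.single j 1 : Vtx d) i + (Pi.single k 1 : Vtx d) i ≤ 1 := by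
  rcases eq_or_ne i j with rfl | h
  · have : (Pi.single k 1 : Vtx d) i = 0 := by simp [Pi.single_apply]; intro h; exact absurd h hjk
    simp [this]
  · have h1 := single01 k i
    simp [Pi.single_apply, h, h1]
    omega

/-- every vertex of an edge of `P` lies in the unit box at `P.corner`. -/
theorem edge_vtx_bounds {d : ℕ} (P : Plaq d) {e : Edge d} (he : e ∈ P.edges) (i : Fin d) :
    (P.corner i ≤ e.1 i ∧ e.1 i ≤ P.corner i + 1) ∧
    (P.corner i ≤ e.2 i ∧ e.2 i ≤ P.corner i + 1) := by
  have h1 := single01 P.dir1 i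
  have h2 := single01 P.dir2 i
  have h3 := single_sum01 P.hdir i
  simp only [Plaq.edges, List.mem_cons, List.mem_singleton, List.not_mem_nil, or_false] at he
  rcases he with rfl | rfl | rfl | rfl <;>
    simp only [Pi.add_apply] <;> constructor <;> constructor <;> omega

/-- if two plaquettes share an edge their corners are close. -/
theorem sharesEdge_corner_close {P Q : Plaq d} (h : SharesEdge P Q) (i : Fin d) :
    -1 ≤ Q.corner i - P.corner i ∧ Q.corner i - P.corner i ≤ 1 := by
  obtain ⟨e, he, h1 | h2⟩ := h
  · have a := (edge_vtx_bounds P he i).1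
    have b := (edge_vtx_bounds Q h1 i).1
    omega
  · have a := (edge_vtx_bounds P he i).2
    have b := (edge_vtx_bounds Q h2 i).1
    simp only [erev] at b
    omega

/-- if a plaquette touches a loop, its corner is close to the start vertex of some edge of `l`. -/
theorem touches_corner_close {q : Plaq d} {l : List (Edge d)} (h : TouchesLoop q l) :
    ∃ v ∈ l.map Prod.fst, ∀ i, -1 ≤ q.corner i - v i ∧ q.corner i - v i ≤ 1 := by
  obtain ⟨e, he, h1 | h2⟩ := h
  · refine ⟨e.1, List.mem_map_of_mem h1, fun i => ?_⟩
    have a := (edge_vtx_bounds q he i).1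
    omega
  · refine ⟨e.2, ?_, fun i => ?_⟩
    · have : (erev e).1 = e.2 := rfl
      exact this ▸ List.mem_map_of_mem h2
    · have a := (edge_vtx_bounds q he i).2
      omega

/-- the finset of plaquettes with corner in a given finset. -/
def FinsetPlaq (F : Finset (Vtx d)) : Finset (Plaq d) :=
  (F ×ˢ (Finset.univ : Finset {p : Fin d × Fin d // p.1 ≠ p.2})).image
    (fun x => ⟨x.1, x.2.1.1, x.2.1.2, x.2.2⟩)

theorem mem_FinsetPlaq {F : Finset (Vtx d)} {q : Plaq d} (h : q.corner ∈ F) :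
    q ∈ FinsetPlaq F := by
  refine Finset.mem_image.2 ⟨(q.corner, ⟨(q.dir1, q.dir2), q.hdir⟩), ?_, rfl⟩
  simp [h]

theorem card_FinsetPlaq (F : Finset (Vtx d)) : (FinsetPlaq F).card ≤ F.card * (d * d) := by
  refine le_trans Finset.card_image_le ?_
  rw [Finset.card_product]
  have : Fintype.card {p : Fin d × Fin d // p.1 ≠ p.2} ≤ d * d := by
    refine le_trans (Fintype.card_subtype_le _) ?_
    simp
  simpa using Nat.mul_le_mul_left F.card this

/-- the box of offsets. -/
def boxF (d : ℕ) : Finset (Vtx d) := Fintype.piFinset fun _ => Finset.Icc (-1 : ℤ) 1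

theorem card_boxF : (boxF d).card ≤ 3 ^ d := by
  rw [boxF, Fintype.card_piFinset]
  have : ∀ i : Fin d, (Finset.Icc (-1:ℤ) 1).card = 3 := by
    intro i; rw [Int.card_Icc]; rfl
  simp [this]

/-- neighbour candidates of a plaquette. -/
def nbF (h : Plaq d) : Finset (Plaq d) := FinsetPlaq ((boxF d).image (fun v => h.corner + v))

theorem mem_nbF {P Q : Plaq d} (h : SharesEdge P Q) : Q ∈ nbF P := by
  refine mem_FinsetPlaq (Finset.mem_image.2 ⟨Q.corner - P.corner, ?_, by abel⟩)
  rw [boxF, Fintype.mem_piFinset]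
  intro i
  have := sharesEdge_corner_close h i
  simp only [Pi.sub_apply, Finset.mem_Icc]
  omega

theorem card_nbF (P : Plaq d) : (nbF P).card ≤ 3 ^ d * (d * d) :=
  le_trans (card_FinsetPlaq _) (Nat.mul_le_mul_right _ (le_trans Finset.card_image_le card_boxF))

/-- anchor plaquettes near a loop. -/
def AnchF (l : List (Edge d)) : Finset (Plaq d) :=
  FinsetPlaq ((l.map Prod.fst).toFinset.biUnion fun v => (boxF d).image (fun w => v + w))

theorem mem_AnchF {q : Plaq d} {l : List (Edge d)} (h : TouchesLoop q l) : q ∈ AnchF l := by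
  obtain ⟨v, hv, hb⟩ := touches_corner_close h
  refine mem_FinsetPlaq (Finset.mem_biUnion.2 ⟨v, List.mem_toFinset.2 hv,
    Finset.mem_image.2 ⟨q.corner - v, ?_, by abel⟩⟩)
  rw [boxF, Fintype.mem_piFinset]
  intro i
  have := hb i
  simp only [Pi.sub_apply, Finset.mem_Icc]
  omega

theorem card_AnchF (l : List (Edge d)) : (AnchF l).card ≤ l.length * (3 ^ d * (d * d)) := by
  refine le_trans (card_FinsetPlaq _) ?_
  have h1 : ((l.map Prod.fst).toFinset.biUnion fun v => (boxF d).image (fun w => v + w)).card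
      ≤ l.length * 3 ^ d := by
    refine le_trans Finset.card_biUnion_le ?_
    refine le_trans (Finset.sum_le_sum fun v _ => le_trans Finset.card_image_le card_boxF) ?_
    rw [Finset.sum_const, smul_eq_mul]
    have : (l.map Prod.fst).toFinset.card ≤ l.length := by
      refine le_trans (List.toFinset_card_le _) (by simp)
    exact Nat.mul_le_mul_right _ this
  calc _ ≤ (l.length * 3 ^ d) * (d * d) := Nat.mul_le_mul_right _ h1
    _ = _ := by ring

end Helpers

section Gen
variable {α : Type*} (r : α → α → Prop)
/-- finset of walks: lists with given head, each step into `nb` of previous, length `≤ n+1`. -/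
def WalksF (nb : α → Finset α) : α → ℕ → Finset (List α)
  | a, 0 => {[a]}
  | a, n+1 => {[a]} ∪ (nb a).biUnion fun b => ((WalksF nb b n).image (a :: ·))

theorem mem_WalksF {r : α → α → Prop} {nb : α → Finset α}
    (hnb : ∀ x y, r x y → y ∈ nb x) :
    ∀ (n : ℕ) (W : List α) (a : α), W.head? = some a → W.Chain' r → W.length ≤ n + 1 →
      W ∈ WalksF nb a n := by
  intro n
  induction n with
  | zero =>
    intro W a hh hc hl
    match W, hh with
    | x :: t, hh =>
      simp only [List.head?] at hh
      obtain rfl : x = a := by injection hh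
      have : t = [] := by
        cases t with
        | nil => rfl
        | cons y s => simp at hl
      subst this
      simp [WalksF]
  | succ n ih =>
    intro W a hh hc hl
    match W, hh with
    | x :: t, hh =>
      obtain rfl : x = a := by injection hh
      cases t with
      | nil => simp [WalksF]
      | cons b s =>
        simp only [List.Chain'] at hc
        rw [List.isChain_cons_cons] at hc
        refine Finset.mem_union_right _ (Finset.mem_biUnion.2 ⟨b, hnb _ _ hc.1, ?_⟩)
        refine Finset.mem_image.2 ⟨b :: s, ?_, rfl⟩
        exact ih (b :: s) b rfl hc.2 (by simpa using Nat.succ_le_succ_iff.1 hl)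

theorem card_WalksF {nb : α → Finset α} {D : ℕ} (hD : ∀ a, (nb a).card ≤ D) :
    ∀ (n : ℕ) (a : α), (WalksF nb a n).card ≤ (D + 1) ^ n := by
  intro n
  induction n with
  | zero => intro a; simp [WalksF]
  | succ n ih =>
    intro a
    refine le_trans (Finset.card_union_le _ _) ?_
    have h2 : ((nb a).biUnion fun b => ((WalksF nb b n).image (a :: ·))).card
        ≤ D * (D + 1) ^ n := by
      refine le_trans Finset.card_biUnion_le ?_
      refine le_trans (Finset.sum_le_sum fun b _ => le_trans Finset.card_image_le (ih b)) ?_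
      rw [Finset.sum_const, smul_eq_mul]
      exact Nat.mul_le_mul_right _ (hD a)
    have : (1 : ℕ) + D * (D + 1) ^ n ≤ (D + 1) ^ (n + 1) := by
      rw [pow_succ]
      have h1 : (1:ℕ) ≤ (D+1)^n := Nat.one_le_pow _ _ (by omega)
      nlinarith
    calc Finset.card {[a]} + _ ≤ 1 + D * (D+1)^n := by
          exact Nat.add_le_add (by simp) h2
      _ ≤ _ := this

theorem len_WalksF {nb : α → Finset α} :
    ∀ (n : ℕ) (a : α) (W : List α), W ∈ WalksF nb a n → W.length ≤ n + 1 := by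
  intro n
  induction n with
  | zero => intro a W hW; simp [WalksF] at hW; simp [hW]
  | succ n ih =>
    intro a W hW
    rcases Finset.mem_union.1 hW with h | h
    · simp at h; simp [h]
    · obtain ⟨b, _, h⟩ := Finset.mem_biUnion.1 h
      obtain ⟨W', hW', rfl⟩ := Finset.mem_image.1 h
      have := ih b W' hW'
      simpa using Nat.succ_le_succ this

/-- stars and bars finset: functions supported on `T` with values and total `≤ N`. -/
def SBF (T : Finset α) (N : ℕ) : Finset (α → ℕ) :=
  ((T.pi fun _ => Finset.range (N+1)).image
    (fun g a => if h : a ∈ T then g a h else 0)).filter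
    (fun f => ∑ a ∈ T, f a ≤ N)

theorem mem_SBF {T : Finset α} {N : ℕ} {f : α → ℕ}
    (h0 : ∀ a, a ∉ T → f a = 0) (hs : ∑ a ∈ T, f a ≤ N) : f ∈ SBF T N := by
  refine Finset.mem_filter.2 ⟨?_, hs⟩
  refine Finset.mem_image.2 ⟨fun a _ => f a, ?_, ?_⟩
  · refine Finset.mem_pi.2 fun a ha => Finset.mem_range.2 ?_
    have : f a ≤ ∑ b ∈ T, f b := Finset.single_le_sum (fun b _ => Nat.zero_le _) ha
    omega
  · funext a
    by_cases h : a ∈ T <;> simp [h, h0]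

theorem SBF_spec {T : Finset α} {N : ℕ} {f : α → ℕ} (hf : f ∈ SBF T N) :
    (∀ a, a ∉ T → f a = 0) ∧ ∑ a ∈ T, f a ≤ N := by
  obtain ⟨h1, h2⟩ := Finset.mem_filter.1 hf
  refine ⟨?_, h2⟩
  obtain ⟨g, _, rfl⟩ := Finset.mem_image.1 h1
  intro a ha
  simp [ha]

theorem sum_two_pow (n : ℕ) : ∑ i ∈ Finset.range n, 2 ^ i = 2 ^ n - 1 := by
  induction n with
  | zero => simp
  | succ n ih =>
    rw [Finset.sum_range_succ, ih, pow_succ]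
    have : (1:ℕ) ≤ 2 ^ n := Nat.one_le_two_pow
    omega

theorem card_SBF (T : Finset α) : ∀ N : ℕ, (SBF T N).card ≤ 2 ^ (N + T.card) := by
  classical
  induction T using Finset.induction_on with
  | empty =>
    intro N
    refine le_trans (Finset.card_filter_le _ _) (le_trans Finset.card_image_le ?_)
    simp [Nat.one_le_two_pow]
  | @insert a T ha ih =>
    intro N
    -- injection into sigma
    have hinj : Set.InjOn (fun f : α → ℕ => (⟨f a, Function.update f a 0⟩ :
        (v : ℕ) × (α → ℕ))) ↑(SBF (insert a T) N) := by
      intro f hf g hg h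
      simp only [Sigma.mk.inj_iff, heq_eq_eq] at h
      funext x
      rcases eq_or_ne x a with rfl | hx
      · exact h.1
      · have := congrFun h.2 x
        simpa [Function.update, hx] using this
    have hmaps : ∀ f ∈ SBF (insert a T) N,
        (⟨f a, Function.update f a 0⟩ : (v : ℕ) × (α → ℕ)) ∈
          (Finset.range (N+1)).sigma (fun v => SBF T (N - v)) := by
      intro f hf
      obtain ⟨h0, hs⟩ := SBF_spec hf
      rw [Finset.sum_insert ha] at hs
      refine Finset.mem_sigma.2 ⟨?_, ?_⟩
      · show f a ∈ Finset.range (N+1)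
        exact Finset.mem_range.2 (by omega)
      show Function.update f a 0 ∈ SBF T (N - f a)
      refine mem_SBF (fun x hx => ?_) ?_
      · rcases eq_or_ne x a with rfl | hxa
        · simp
        · rw [Function.update_of_ne hxa]
          exact h0 x (by simp [hx, hxa])
      · have : ∑ x ∈ T, Function.update f a 0 x = ∑ x ∈ T, f x := by
          refine Finset.sum_congr rfl fun x hx => ?_
          rw [Function.update_of_ne (by rintro rfl; exact ha hx)]
        omega
    have hcard := Finset.card_le_card_of_injOn _ hmaps hinj
    refine le_trans hcard ?_
    rw [Finset.card_sigma]
    have : ∑ v ∈ Finset.range (N+1), (SBF T (N - v)).card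
        ≤ ∑ v ∈ Finset.range (N+1), 2 ^ (N - v + T.card) :=
      Finset.sum_le_sum fun v _ => ih (N - v)
    refine le_trans this ?_
    have h2 : ∑ v ∈ Finset.range (N+1), 2 ^ (N - v + T.card)
        = 2 ^ T.card * ∑ v ∈ Finset.range (N+1), 2 ^ (N - v) := by
      rw [Finset.mul_sum]
      refine Finset.sum_congr rfl fun v _ => by rw [pow_add, mul_comm]
    rw [h2]
    have h3 : ∑ v ∈ Finset.range (N+1), 2 ^ (N - v) = ∑ j ∈ Finset.range (N+1), 2 ^ j := by
      refine Finset.sum_nbij' (fun v => N - v) (fun j => N - j) ?_ ?_ ?_ ?_ ?_ <;>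
        intros <;> simp_all [Finset.mem_range] <;> omega
    rw [h3, sum_two_pow, Finset.card_insert_of_notMem ha]
    have h4 : (2:ℕ) ^ T.card * (2 ^ (N+1) - 1) ≤ 2 ^ T.card * 2 ^ (N+1) :=
      Nat.mul_le_mul_left _ (Nat.sub_le _ _)
    have h5 : (2:ℕ) ^ T.card * 2 ^ (N+1) = 2 ^ (N + (T.card + 1)) := by
      rw [← pow_add]; ring_nf
    omega

theorem reflTransGen_symm {r : α → α → Prop} (hs : ∀ a b, r a b → r b a) {a b : α}
    (h : Relation.ReflTransGen r a b) : Relation.ReflTransGen r b a := by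
  induction h with
  | refl => exact Relation.ReflTransGen.refl
  | tail h1 h2 ih =>
    exact Relation.ReflTransGen.trans (Relation.ReflTransGen.single (hs _ _ h2)) ih

/-- `n`-step reachability from `a` within `S`. -/
def StepsIn (S : Finset α) (a : α) : ℕ → α → Prop
  | 0 => fun s => s = a
  | (n+1) => fun s => ∃ t, StepsIn S a n t ∧ (t ∈ S ∧ s ∈ S ∧ r t s)

theorem stepsIn_of_reach {S : Finset α} {a s : α}
    (h : Relation.ReflTransGen (fun x y => x ∈ S ∧ y ∈ S ∧ r x y) a s) :
    ∃ n, StepsIn r S a n s := by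
  induction h with
  | refl => exact ⟨0, rfl⟩
  | tail h1 h2 ih =>
    obtain ⟨n, hn⟩ := ih
    exact ⟨n + 1, _, hn, h2⟩

theorem spanning_walk (hsym : ∀ a b, r a b → r b a) :
    ∀ (n : ℕ) (S : Finset α) (a : α), S.card ≤ n → a ∈ S →
    (∀ s ∈ S, Relation.ReflTransGen (fun x y => x ∈ S ∧ y ∈ S ∧ r x y) a s) →
    ∃ W : List α, W.head? = some a ∧ W.Chain' r ∧ (∀ x ∈ W, x ∈ S) ∧
      (∀ s ∈ S, s ∈ W) ∧ W.length ≤ 2 * S.card - 1 := by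
  intro n
  induction n with
  | zero => intro S a hc ha _; exact absurd (Finset.card_pos.2 ⟨a, ha⟩) (by omega)
  | succ n ih =>
    intro S a hc ha hconn
    by_cases htriv : ∀ s ∈ S, s = a
    · refine ⟨[a], rfl, List.isChain_singleton a, by simpa using ha, ?_, ?_⟩
      · intro s hs; simp [htriv s hs]
      · have : 1 ≤ S.card := Finset.card_pos.2 ⟨a, ha⟩
        simp; omega
    push_neg at htriv
    obtain ⟨u, huS, hua⟩ := htriv
    -- distance function
    set D : α → ℕ := fun s => sInf {n | StepsIn r S a n s} with hD
    have hDne : ∀ s ∈ S, {n | StepsIn r S a n s}.Nonempty := fun s hs =>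
      stepsIn_of_reach r (hconn s hs)
    have hDs : ∀ s ∈ S, StepsIn r S a (D s) s := fun s hs => Nat.sInf_mem (hDne s hs)
    have hDle : ∀ {s m}, StepsIn r S a m s → D s ≤ m := fun {s m} h => Nat.sInf_le h
    have hD0 : ∀ {s}, D s = 0 → StepsIn r S a (D s) s → s = a := by
      intro s h hs; rw [h] at hs; exact hs
    -- maximizer
    obtain ⟨u₀, hu₀S, hu₀max⟩ := S.exists_max_image D ⟨a, ha⟩
    have hDu : 1 ≤ D u₀ := by
      by_contra h
      push_neg at h
      have h0 : D u₀ = 0 := by omega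
      have hu0 : D u = 0 := le_antisymm (h0 ▸ hu₀max u huS) (Nat.zero_le _)
      exact hua (hD0 hu0 (hDs u huS))
    have hu₀a : u₀ ≠ a := by
      intro h
      have : D a = 0 := le_antisymm (hDle rfl) (Nat.zero_le _)
      rw [h] at hDu; omega
    -- predecessor of u₀
    obtain ⟨m, hm⟩ : ∃ m, D u₀ = m + 1 := ⟨D u₀ - 1, by omega⟩
    obtain ⟨t, htm, htS, _, hrt⟩ : ∃ t, StepsIn r S a m t ∧ (t ∈ S ∧ u₀ ∈ S ∧ r t u₀) := by
      have := hDs u₀ hu₀S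
      rw [hm] at this
      exact this
    have htu : t ≠ u₀ := by
      intro h
      have := hDle htm
      rw [h] at this
      omega
    -- the erased set
    set S' := S.erase u₀ with hS'
    have haS' : a ∈ S' := Finset.mem_erase.2 ⟨Ne.symm hu₀a, ha⟩
    have hcS' : S'.card = S.card - 1 := Finset.card_erase_of_mem hu₀S
    have hS'conn : ∀ s ∈ S', Relation.ReflTransGen
        (fun x y => x ∈ S' ∧ y ∈ S' ∧ r x y) a s := by
      have key : ∀ k, ∀ s ∈ S', D s ≤ k → Relation.ReflTransGen
          (fun x y => x ∈ S' ∧ y ∈ S' ∧ r x y) a s := by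
        intro k
        induction k with
        | zero =>
          intro s hs hk
          have : s = a := hD0 (by omega) (hDs s (Finset.mem_of_mem_erase hs))
          rw [this]
        | succ k ihk =>
          intro s hs hk
          rcases Nat.eq_zero_or_pos (D s) with h0 | hpos
          · have : s = a := hD0 h0 (hDs s (Finset.mem_of_mem_erase hs))
            rw [this]
          · obtain ⟨j, hj⟩ : ∃ j, D s = j + 1 := ⟨D s - 1, by omega⟩
            obtain ⟨t', ht'j, ht'S, hsS, hrts⟩ : ∃ t', StepsIn r S a j t' ∧
                (t' ∈ S ∧ s ∈ S ∧ r t' s) := by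
              have := hDs s (Finset.mem_of_mem_erase hs)
              rw [hj] at this
              exact this
            have hDt' : D t' ≤ j := hDle ht'j
            have ht'u₀ : t' ≠ u₀ := by
              intro h
              have := hu₀max s (Finset.mem_of_mem_erase hs)
              rw [h] at hDt'
              omega
            have ht'S' : t' ∈ S' := Finset.mem_erase.2 ⟨ht'u₀, ht'S⟩
            exact (ihk t' ht'S' (by omega)).tail ⟨ht'S', hs, hrts⟩
      intro s hs
      exact key (D s) s hs le_rfl
    obtain ⟨W', hWh, hWc, hWmem, hWcov, hWlen⟩ :=
      ih S' a (by omega) haS' hS'conn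
    have htS' : t ∈ S' := Finset.mem_erase.2 ⟨htu, htS⟩
    obtain ⟨W₁, W₂, hsplit⟩ := List.append_of_mem (hWcov t htS')
    have hcard2 : 2 ≤ S.card := by
      have : ({a, u₀} : Finset α) ⊆ S := by
        intro x hx
        rcases Finset.mem_insert.1 hx with rfl | hx
        · exact ha
        · rw [Finset.mem_singleton.1 hx]; exact hu₀S
      calc 2 = ({a, u₀} : Finset α).card := by
            rw [Finset.card_insert_of_notMem (by simpa using Ne.symm hu₀a)]; simp
        _ ≤ S.card := Finset.card_le_card this
    refine ⟨W₁ ++ t :: u₀ :: t :: W₂, ?_, ?_, ?_, ?_, ?_⟩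
    · rw [hsplit] at hWh
      cases W₁ with
      | nil => simpa using hWh
      | cons x xs => simpa using hWh
    · rw [hsplit] at hWc
      simp only [List.Chain'] at hWc ⊢
      rw [List.isChain_split] at hWc ⊢
      refine ⟨hWc.1, ?_⟩
      rw [List.isChain_cons_cons, List.isChain_cons_cons]
      exact ⟨hrt, hsym _ _ hrt, hWc.2⟩
    · intro x hx
      simp only [List.mem_append, List.mem_cons] at hx
      rcases hx with h | h | h | h | h
      · exact Finset.mem_of_mem_erase (hWmem x (by rw [hsplit]; simp [h]))
      · rw [h]; exact htS
      · rw [h]; exact hu₀S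
      · rw [h]; exact htS
      · exact Finset.mem_of_mem_erase (hWmem x (by rw [hsplit]; simp [h]))
    · intro s hs
      rcases eq_or_ne s u₀ with rfl | hsu
      · simp
      · have := hWcov s (Finset.mem_erase.2 ⟨hsu, hs⟩)
        rw [hsplit] at this
        simp only [List.mem_append, List.mem_cons] at this ⊢
        tauto
    · have : (W₁ ++ t :: u₀ :: t :: W₂).length = W'.length + 2 := by
        rw [hsplit]; simp; omega
      rw [this, hcS'] at *
      omega

end Gen

section MainSec
variable {d : ℕ}

def DD (d : ℕ) : ℕ := 3 ^ d * (d * d)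

theorem card_nbF' (P : Plaq d) : (nbF P).card ≤ DD d := card_nbF P

theorem psupp_finite {K : Plaq d → ℕ} (hfin : (Function.support K).Finite) :
    (psupp K).Finite := by
  refine Set.Finite.subset (hfin.union (hfin.image Plaq.rev)) ?_
  intro q hq
  rcases hq.2 with h | h
  · exact Or.inl h
  · exact Or.inr ⟨q.rev, h, Plaq.rev_rev q⟩

theorem card_psupp_le {K : Plaq d → ℕ} (hfin : (Function.support K).Finite)
    {A : ℕ} (hA : parea K = A) : (psupp_finite hfin).toFinset.card ≤ A := by
  classical
  set Sfin := (psupp_finite hfin).toFinset with hSfin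
  set c : Plaq d → Plaq d := fun q => if K q ≠ 0 then q else q.rev with hc
  have hmem : ∀ q ∈ Sfin, c q ∈ hfin.toFinset := by
    intro q hq
    rw [Set.Finite.mem_toFinset] at hq ⊢
    by_cases h : K q ≠ 0
    · simpa [hc, h] using h
    · push_neg at h
      rcases hq.2 with h' | h'
      · exact absurd h h'
      · simpa [hc, h] using h'
  have hinj : Set.InjOn c ↑Sfin := by
    intro q hq q' hq' h
    rw [Finset.mem_coe, hSfin, Set.Finite.mem_toFinset] at hq hq'
    have hqpos := hq.1
    have hq'pos := hq'.1
    have hcq : c q = q ∨ c q = q.rev := by by_cases h : K q ≠ 0 <;> simp [hc, h]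
    have hcq' : c q' = q' ∨ c q' = q'.rev := by by_cases h : K q' ≠ 0 <;> simp [hc, h]
    rcases hcq with h1 | h1 <;> rcases hcq' with h2 | h2 <;> rw [h1, h2] at h
    · exact h
    · exact absurd (h ▸ hqpos) (Plaq.not_pos_rev q' hq'pos)
    · rw [← h] at hq'pos
      exact absurd hq'pos (Plaq.not_pos_rev q hqpos)
    · have := congrArg Plaq.rev h
      rwa [Plaq.rev_rev, Plaq.rev_rev] at this
  have hKpos : ∀ q ∈ Sfin, 1 ≤ K (c q) := by
    intro q hq
    rw [hSfin, Set.Finite.mem_toFinset] at hq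
    by_cases h : K q ≠ 0
    · simp only [hc, if_pos h]; omega
    · push_neg at h
      rcases hq.2 with h' | h'
      · exact absurd h h'
      · simp only [hc, h]; simp; omega
  have h1 : Sfin.card = (Sfin.image c).card := (Finset.card_image_of_injOn hinj).symm
  have h2 : (Sfin.image c).card ≤ ∑ p ∈ Sfin.image c, K p := by
    refine le_trans (by simp) (Finset.card_nsmul_le_sum _ _ 1 ?_)
    intro p hp
    obtain ⟨q, hq, rfl⟩ := Finset.mem_image.1 hp
    exact hKpos q hq
  have h3 : ∑ p ∈ Sfin.image c, K p ≤ ∑ p ∈ hfin.toFinset, K p := by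
    refine Finset.sum_le_sum_of_subset ?_
    intro p hp
    obtain ⟨q, hq, rfl⟩ := Finset.mem_image.1 hp
    exact hmem q hq
  have h4 : ∑ p ∈ hfin.toFinset, K p = A := by
    rw [← hA, parea, finsum_eq_sum K hfin]
  omega

/-- candidate supports. -/
def SuppCand (d : ℕ) (l : List (Edge d)) (A : ℕ) : Finset (Finset (Plaq d)) :=
  (AnchF l).powerset.biUnion fun T =>
    (SBF T (2 * A)).biUnion fun nf =>
      (T.pi fun a => WalksF nbF a (nf a)).image fun f =>
        T.attach.biUnion fun a => (f a.1 a.2).toFinset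

theorem card_SuppCand (l : List (Edge d)) (A : ℕ) :
    (SuppCand d l A).card ≤
      2 ^ (AnchF l).card * (2 ^ (2 * A + (AnchF l).card) * (DD d + 1) ^ (2 * A)) := by
  refine le_trans Finset.card_biUnion_le ?_
  have hT : ∀ T ∈ (AnchF l).powerset,
      ((SBF T (2 * A)).biUnion fun nf =>
        (T.pi fun a => WalksF nbF a (nf a)).image fun f =>
          T.attach.biUnion fun a => (f a.1 a.2).toFinset).card
      ≤ 2 ^ (2 * A + (AnchF l).card) * (DD d + 1) ^ (2 * A) := by
    intro T hT
    refine le_trans Finset.card_biUnion_le ?_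
    have hnf : ∀ nf ∈ SBF T (2 * A),
        ((T.pi fun a => WalksF nbF a (nf a)).image fun f =>
          T.attach.biUnion fun a => (f a.1 a.2).toFinset).card
        ≤ (DD d + 1) ^ (2 * A) := by
      intro nf hnf
      refine le_trans Finset.card_image_le ?_
      rw [Finset.card_pi]
      calc ∏ a ∈ T, (WalksF nbF a (nf a)).card
          ≤ ∏ a ∈ T, (DD d + 1) ^ (nf a) :=
            Finset.prod_le_prod' fun a _ => card_WalksF card_nbF' (nf a) a
        _ = (DD d + 1) ^ (∑ a ∈ T, nf a) := Finset.prod_pow_eq_pow_sum T nf _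
        _ ≤ (DD d + 1) ^ (2 * A) :=
            Nat.pow_le_pow_right (by omega) (SBF_spec hnf).2
    calc ∑ nf ∈ SBF T (2 * A), _ ≤ ∑ nf ∈ SBF T (2 * A), (DD d + 1) ^ (2 * A) :=
          Finset.sum_le_sum hnf
      _ = (SBF T (2 * A)).card * (DD d + 1) ^ (2 * A) := by
          rw [Finset.sum_const, smul_eq_mul]
      _ ≤ 2 ^ (2 * A + T.card) * (DD d + 1) ^ (2 * A) :=
          Nat.mul_le_mul_right _ (card_SBF T (2 * A))
      _ ≤ 2 ^ (2 * A + (AnchF l).card) * (DD d + 1) ^ (2 * A) := by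
          refine Nat.mul_le_mul_right _ (Nat.pow_le_pow_right (by omega) ?_)
          have := Finset.card_le_card (Finset.mem_powerset.1 hT)
          omega
  calc ∑ T ∈ (AnchF l).powerset, _
      ≤ ∑ T ∈ (AnchF l).powerset, (2 ^ (2 * A + (AnchF l).card) * (DD d + 1) ^ (2 * A)) :=
        Finset.sum_le_sum hT
    _ = 2 ^ (AnchF l).card * (2 ^ (2 * A + (AnchF l).card) * (DD d + 1) ^ (2 * A)) := by
        rw [Finset.sum_const, smul_eq_mul, Finset.card_powerset]

theorem size_SuppCand {l : List (Edge d)} {A : ℕ} {S : Finset (Plaq d)}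
    (hS : S ∈ SuppCand d l A) : S.card ≤ 2 * A + (AnchF l).card := by
  obtain ⟨T, hT, hS⟩ := Finset.mem_biUnion.1 hS
  obtain ⟨nf, hnf, hS⟩ := Finset.mem_biUnion.1 hS
  obtain ⟨f, hf, rfl⟩ := Finset.mem_image.1 hS
  refine le_trans Finset.card_biUnion_le ?_
  have hfl : ∀ a : {x // x ∈ T}, ((f a.1 a.2).toFinset).card ≤ nf a.1 + 1 := by
    intro a
    refine le_trans (List.toFinset_card_le _) ?_
    exact len_WalksF (nf a.1) a.1 _ (Finset.mem_pi.1 hf a.1 a.2)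
  calc ∑ a ∈ T.attach, ((f a.1 a.2).toFinset).card
      ≤ ∑ a ∈ T.attach, (nf a.1 + 1) := Finset.sum_le_sum fun a _ => hfl a
    _ = ∑ a ∈ T, (nf a + 1) := Finset.sum_attach T (fun a => nf a + 1)
    _ = (∑ a ∈ T, nf a) + T.card := by rw [Finset.sum_add_distrib, Finset.sum_const, smul_eq_mul, mul_one]
    _ ≤ 2 * A + (AnchF l).card := by
        have h1 := (SBF_spec hnf).2
        have h2 := Finset.card_le_card (Finset.mem_powerset.1 hT)
        omega
theorem psupp_mem_SuppCand {d : ℕ} (hd : 2 ≤ d) {l : List (Edge d)} {A : ℕ}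
    {K : Plaq d → ℕ} (hfin : (Function.support K).Finite) (hlc : LConnected l K)
    (hA : parea K = A) : (psupp_finite hfin).toFinset ∈ SuppCand d l A := by
  classical
  set Sfin := (psupp_finite hfin).toFinset with hSdef
  set rel : Plaq d → Plaq d → Prop :=
    fun a b => a ∈ psupp K ∧ b ∈ psupp K ∧ SharesEdge a b with hrel
  have hrelsymm : ∀ a b, rel a b → rel b a :=
    fun a b ⟨h1, h2, h3⟩ => ⟨h2, h1, sharesEdge_symm h3⟩
  set Reach := Relation.ReflTransGen rel with hReach
  have hReachsymm : ∀ {a b}, Reach a b → Reach b a :=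
    fun h => reflTransGen_symm hrelsymm h
  set comp : Plaq d → Finset (Plaq d) := fun q => Sfin.filter (fun s => Reach q s) with hcomp
  have hcompeq : ∀ {q q'}, Reach q q' → comp q = comp q' := by
    intro q q' h
    ext s
    simp only [hcomp, Finset.mem_filter, and_congr_right_iff]
    intro _
    exact ⟨fun h2 => (hReachsymm h).trans h2, fun h2 => h.trans h2⟩
  have junk : Plaq d := ⟨0, ⟨1, by omega⟩, ⟨0, by omega⟩, by simp [Fin.ext_iff]⟩
  set anchOf : Finset (Plaq d) → Plaq d := fun c =>
    if h : ∃ a, a ∈ c ∧ a ∈ psupp K ∧ TouchesLoop a l then h.choose else junk with hanchOf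
  have hanchSpec : ∀ q ∈ Sfin, anchOf (comp q) ∈ comp q ∧ anchOf (comp q) ∈ psupp K ∧
      TouchesLoop (anchOf (comp q)) l := by
    intro q hq
    have hqps : q ∈ psupp K := (Set.Finite.mem_toFinset _).1 hq
    obtain ⟨q', hq'ps, hreach, htouch⟩ := hlc q hqps
    have hex : ∃ a, a ∈ comp q ∧ a ∈ psupp K ∧ TouchesLoop a l :=
      ⟨q', Finset.mem_filter.2 ⟨(Set.Finite.mem_toFinset _).2 hq'ps, hreach⟩, hq'ps, htouch⟩
    rw [hanchOf]
    simp only [dif_pos hex]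
    exact hex.choose_spec
  set T := Sfin.image (fun q => anchOf (comp q)) with hT
  have hTfacts : ∀ b ∈ T, b = anchOf (comp b) ∧ b ∈ Sfin ∧ TouchesLoop b l := by
    intro b hb
    obtain ⟨q, hq, rfl⟩ := Finset.mem_image.1 hb
    obtain ⟨h1, h2, h3⟩ := hanchSpec q hq
    have hreach : Reach q (anchOf (comp q)) := (Finset.mem_filter.1 h1).2
    have hce : comp (anchOf (comp q)) = comp q := (hcompeq hreach).symm
    exact ⟨by rw [hce], (Finset.mem_filter.1 h1).1, h3⟩
  have hTsub : T ⊆ AnchF l := fun b hb => mem_AnchF (hTfacts b hb).2.2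
  have hTcomp : ∀ b ∈ T, b ∈ comp b := fun b hb =>
    Finset.mem_filter.2 ⟨(hTfacts b hb).2.1, Relation.ReflTransGen.refl⟩
  have hdisj : ∀ a ∈ T, ∀ b ∈ T, a ≠ b → Disjoint (comp a) (comp b) := by
    intro a ha b hb hab
    rw [Finset.disjoint_left]
    intro s hsa hsb
    have h1 : Reach a s := (Finset.mem_filter.1 hsa).2
    have h2 : Reach b s := (Finset.mem_filter.1 hsb).2
    have hce : comp a = comp b := hcompeq (h1.trans (hReachsymm h2))
    exact hab (((hTfacts a ha).1.trans (by rw [hce])).trans (hTfacts b hb).1.symm)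
  have hcover : T.biUnion comp = Sfin := by
    ext s
    constructor
    · intro hs
      obtain ⟨a, _, hsa⟩ := Finset.mem_biUnion.1 hs
      exact (Finset.mem_filter.1 hsa).1
    · intro hs
      refine Finset.mem_biUnion.2 ⟨anchOf (comp s), Finset.mem_image_of_mem _ hs, ?_⟩
      have h1 := (hanchSpec s hs).1
      have hreach : Reach s (anchOf (comp s)) := (Finset.mem_filter.1 h1).2
      rw [← hcompeq hreach]
      exact Finset.mem_filter.2 ⟨hs, Relation.ReflTransGen.refl⟩
  have hsumcard : ∑ a ∈ T, (comp a).card = Sfin.card := by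
    rw [← Finset.card_biUnion hdisj, hcover]
  have hcardA : Sfin.card ≤ A := card_psupp_le hfin hA
  set nf : Plaq d → ℕ := fun p => if p ∈ T then 2 * (comp p).card else 0 with hnf
  have hnfmem : nf ∈ SBF T (2 * A) := by
    refine mem_SBF (fun a ha => by simp [hnf, ha]) ?_
    have heq : ∑ a ∈ T, nf a = ∑ a ∈ T, 2 * (comp a).card :=
      Finset.sum_congr rfl fun a ha => by simp [hnf, ha]
    rw [heq, ← Finset.mul_sum, hsumcard]
    omega
  have hwalks : ∀ a ∈ T, ∃ W : List (Plaq d), W.head? = some a ∧ W.Chain' SharesEdge ∧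
      (∀ x ∈ W, x ∈ comp a) ∧ (∀ s ∈ comp a, s ∈ W) ∧
      W.length ≤ 2 * (comp a).card - 1 := by
    intro a ha
    refine spanning_walk SharesEdge (fun x y h => sharesEdge_symm h) ((comp a).card) (comp a) a
      le_rfl (hTcomp a ha) ?_
    intro s hs
    have hreach : Reach a s := (Finset.mem_filter.1 hs).2
    clear hs
    induction hreach with
    | refl => exact Relation.ReflTransGen.refl
    | @tail b c h1 h2 ih =>
      have hbc : rel b c := h2
      have hbin : b ∈ comp a := Finset.mem_filter.2
        ⟨(Set.Finite.mem_toFinset _).2 hbc.1, h1⟩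
      have hcin : c ∈ comp a := Finset.mem_filter.2
        ⟨(Set.Finite.mem_toFinset _).2 hbc.2.1, h1.tail h2⟩
      exact ih.tail ⟨hbin, hcin, hbc.2.2⟩
  choose W hW1 hW2 hW3 hW4 hW5 using hwalks
  have hWtoF : ∀ a (ha : a ∈ T), (W a ha).toFinset = comp a := by
    intro a ha
    ext x
    rw [List.mem_toFinset]
    exact ⟨fun h => hW3 a ha x h, fun h => hW4 a ha x h⟩
  refine Finset.mem_biUnion.2 ⟨T, Finset.mem_powerset.2 hTsub, ?_⟩
  refine Finset.mem_biUnion.2 ⟨nf, hnfmem, ?_⟩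
  refine Finset.mem_image.2 ⟨fun a ha => W a ha, ?_, ?_⟩
  · refine Finset.mem_pi.2 fun a ha => ?_
    refine mem_WalksF (fun x y h => mem_nbF h) (nf a) (W a ha) a (hW1 a ha) (hW2 a ha) ?_
    have hlen := hW5 a ha
    have hnfa : nf a = 2 * (comp a).card := by simp [hnf, ha]
    omega
  · ext x
    simp only [Finset.mem_biUnion, Finset.mem_attach, true_and, Subtype.exists]
    constructor
    · rintro ⟨a, ha, hx⟩
      rw [hWtoF a ha] at hx
      exact (Finset.mem_filter.1 hx).1
    · intro hx
      obtain ⟨a, ha, hxa⟩ := Finset.mem_biUnion.1 (hcover ▸ hx)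
      exact ⟨a, ha, by rw [hWtoF a ha]; exact hxa⟩

end MainSec


/-- There is a constant `C = C(d)` such that for every loop `l` and every `A ≥ 1`, the set
of `l`-connected plaquette assignments with area `A` is finite with cardinality at most
`C ^ |l| * C ^ A`. -/
theorem stmt7 (d : ℕ) (hd : 2 ≤ d) :
    ∃ C : ℕ, 1 ≤ C ∧ ∀ l : List (Edge d), IsLoop l → ∀ A : ℕ, 1 ≤ A →
      {K : Plaq d → ℕ | (Function.support K).Finite ∧ LConnected l K ∧
          parea K = A}.Finite ∧
        Nat.card {K : Plaq d → ℕ | (Function.support K).Finite ∧ LConnected l K ∧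
          parea K = A} ≤ C ^ l.length * C ^ A := by
  classical
  refine ⟨2 ^ (4 * DD d + 7) * (DD d + 1) ^ 2, Nat.one_le_iff_ne_zero.mpr (by positivity), ?_⟩
  intro l _hl A _hA
  set E := (AnchF l).card with hE
  set BigF := (SuppCand d l A).biUnion
      (fun S => SBF (S ∪ S.image Plaq.rev) A) with hBigF
  have hincl : {K : Plaq d → ℕ | (Function.support K).Finite ∧ LConnected l K ∧
      parea K = A} ⊆ ↑BigF := by
    intro K hK
    obtain ⟨hfin, hlc, hA⟩ := hK
    have hsupp := psupp_mem_SuppCand hd hfin hlc hA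
    refine Finset.mem_coe.2 (Finset.mem_biUnion.2 ⟨_, hsupp, ?_⟩)
    set U := (psupp_finite hfin).toFinset ∪ ((psupp_finite hfin).toFinset).image Plaq.rev
      with hU
    have hsubU : ∀ p, K p ≠ 0 → p ∈ U := by
      intro p hp
      rcases Plaq.pos_or_rev_pos p with hpos | hpos
      · refine Finset.mem_union_left _ ?_
        rw [Set.Finite.mem_toFinset]
        exact ⟨hpos, Or.inl hp⟩
      · refine Finset.mem_union_right _ ?_
        refine Finset.mem_image.2 ⟨p.rev, ?_, Plaq.rev_rev p⟩
        rw [Set.Finite.mem_toFinset]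
        exact ⟨hpos, Or.inr (by rwa [Plaq.rev_rev])⟩
    refine mem_SBF (fun p hp => by by_contra h; exact hp (hsubU p h)) ?_
    have hsum : ∑ p ∈ U, K p = A := by
      rw [← hA, parea, finsum_eq_sum K hfin]
      refine (Finset.sum_subset ?_ ?_).symm
      · intro p hp
        exact hsubU p ((Set.Finite.mem_toFinset hfin).1 hp)
      · intro p _ hp
        by_contra h
        exact hp ((Set.Finite.mem_toFinset hfin).2 h)
    omega
  refine ⟨Set.Finite.subset BigF.finite_toSet hincl, ?_⟩
  have h1 : Nat.card {K : Plaq d → ℕ | (Function.support K).Finite ∧ LConnected l K ∧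
      parea K = A} ≤ BigF.card := by
    rw [Nat.card_coe_set_eq]
    calc Set.ncard _ ≤ Set.ncard ↑BigF := Set.ncard_le_ncard hincl BigF.finite_toSet
      _ = BigF.card := Set.ncard_coe_finset _
  refine le_trans h1 ?_
  have h2 : BigF.card ≤ (SuppCand d l A).card * 2 ^ (A + 2 * (2 * A + E)) := by
    refine le_trans Finset.card_biUnion_le ?_
    have hS : ∀ S ∈ SuppCand d l A, (SBF (S ∪ S.image Plaq.rev) A).card
        ≤ 2 ^ (A + 2 * (2 * A + E)) := by
      intro S hS
      refine le_trans (card_SBF _ A) (Nat.pow_le_pow_right (by omega) ?_)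
      have hu : (S ∪ S.image Plaq.rev).card ≤ 2 * S.card := by
        refine le_trans (Finset.card_union_le _ _) ?_
        have := Finset.card_image_le (s := S) (f := Plaq.rev)
        omega
      have := size_SuppCand hS
      omega
    calc ∑ S ∈ SuppCand d l A, (SBF (S ∪ S.image Plaq.rev) A).card
        ≤ ∑ _S ∈ SuppCand d l A, 2 ^ (A + 2 * (2 * A + E)) := Finset.sum_le_sum hS
      _ = (SuppCand d l A).card * 2 ^ (A + 2 * (2 * A + E)) := by
          rw [Finset.sum_const, smul_eq_mul]
  have h3 := card_SuppCand l A
  have h4 : BigF.card ≤ 2 ^ (4 * E + 7 * A) * (DD d + 1) ^ (2 * A) := by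
    calc BigF.card ≤ (2 ^ E * (2 ^ (2 * A + E) * (DD d + 1) ^ (2 * A)))
          * 2 ^ (A + 2 * (2 * A + E)) :=
          le_trans h2 (Nat.mul_le_mul_right _ h3)
      _ = 2 ^ (4 * E + 7 * A) * (DD d + 1) ^ (2 * A) := by
          rw [show 4 * E + 7 * A = E + (2 * A + E) + (A + 2 * (2 * A + E)) by ring,
            pow_add, pow_add]
          ring
  refine le_trans h4 ?_
  have hE' : E ≤ DD d * l.length := by
    have := card_AnchF l
    rw [hE]
    calc (AnchF l).card ≤ l.length * (3 ^ d * (d * d)) := this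
      _ = DD d * l.length := by rw [DD]; ring
  have hC1 : 2 ^ (4 * E) ≤ (2 ^ (4 * DD d + 7) * (DD d + 1) ^ 2) ^ l.length := by
    calc 2 ^ (4 * E) ≤ 2 ^ (4 * (DD d * l.length)) :=
          Nat.pow_le_pow_right (by omega) (by omega)
      _ = (2 ^ (4 * DD d)) ^ l.length := by rw [← pow_mul]; congr 1; ring
      _ ≤ (2 ^ (4 * DD d + 7) * (DD d + 1) ^ 2) ^ l.length := by
          refine Nat.pow_le_pow_left ?_ _
          calc 2 ^ (4 * DD d) ≤ 2 ^ (4 * DD d + 7) :=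
                Nat.pow_le_pow_right (by omega) (by omega)
            _ ≤ 2 ^ (4 * DD d + 7) * (DD d + 1) ^ 2 :=
                Nat.le_mul_of_pos_right _ (by positivity)
  have hC2 : 2 ^ (7 * A) * (DD d + 1) ^ (2 * A)
      ≤ (2 ^ (4 * DD d + 7) * (DD d + 1) ^ 2) ^ A := by
    calc 2 ^ (7 * A) * (DD d + 1) ^ (2 * A) = (2 ^ 7 * (DD d + 1) ^ 2) ^ A := by
          rw [mul_pow, ← pow_mul, ← pow_mul, Nat.mul_comm 7 A, Nat.mul_comm 2 A]
      _ ≤ (2 ^ (4 * DD d + 7) * (DD d + 1) ^ 2) ^ A := by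
          refine Nat.pow_le_pow_left (Nat.mul_le_mul_right _ ?_) _
          exact Nat.pow_le_pow_right (by omega) (by omega)
  calc 2 ^ (4 * E + 7 * A) * (DD d + 1) ^ (2 * A)
      = 2 ^ (4 * E) * (2 ^ (7 * A) * (DD d + 1) ^ (2 * A)) := by rw [pow_add]; ring
    _ ≤ (2 ^ (4 * DD d + 7) * (DD d + 1) ^ 2) ^ l.length
        * ((2 ^ (4 * DD d + 7) * (DD d + 1) ^ 2) ^ A) := Nat.mul_le_mul hC1 hC2

end
end
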